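/- arXiv:1711.08812 — 11 statements merged into one kernel-verified Lean document; each statement's English description precedes it below -/
import Mathlib

section
/- Let s_x = 2·h_x be an even non-negative integer. The minimum cardinality of a finite set A ⊆ [0,h_x] × [0,1] of integer pairs satisfying A + A ⊇ [0,s_x] × [0,2] equals twice the minimum cardinality of a finite set B ⊆ [0,h_x] of integers satisfying B + B ⊇ [0,s_x]. (In the paper's notation, k*(s_x,2) = 2·k*(s_x,0).) -/
open Pointwise

lemma two_rows_construct (hx : ℕ) (B : Finset ℕ) (hB : ∀ b ∈ B, b ≤ hx)
    (hcov : ∀ x ≤ 2 * hx, x ∈ B + B) :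
    ∃ A : Finset (ℕ × ℕ), A.card = 2 * B.card ∧
      (∀ p ∈ A, p.1 ≤ hx ∧ p.2 ≤ 1) ∧
      (∀ x ≤ 2 * hx, ∀ y ≤ 2, (x, y) ∈ A + A) := by
  refine ⟨B.image (fun b => (b, 0)) ∪ B.image (fun b => (b, 1)), ?_, ?_, ?_⟩
  · rw [Finset.card_union_of_disjoint, Finset.card_image_of_injective,
      Finset.card_image_of_injective]
    · ring
    · intro a b h; simpa using h
    · intro a b h; simpa using h
    · rw [Finset.disjoint_left]
      rintro p hp hq
      simp only [Finset.mem_image] at hp hq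
      obtain ⟨a, _, rfl⟩ := hp
      obtain ⟨b, _, h⟩ := hq
      simp at h
  · intro p hp
    simp only [Finset.mem_union, Finset.mem_image] at hp
    rcases hp with ⟨a, ha, rfl⟩ | ⟨a, ha, rfl⟩ <;> exact ⟨hB a ha, by omega⟩
  · intro x hxle y hy
    obtain ⟨b, hb, c, hc, hbc⟩ := Finset.mem_add.mp (hcov x hxle)
    interval_cases y
    · exact Finset.mem_add.mpr ⟨(b, 0),
        Finset.mem_union_left _ (Finset.mem_image_of_mem _ hb), (c, 0),
        Finset.mem_union_left _ (Finset.mem_image_of_mem _ hc), by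
          simp [Prod.ext_iff, hbc]⟩
    · exact Finset.mem_add.mpr ⟨(b, 0),
        Finset.mem_union_left _ (Finset.mem_image_of_mem _ hb), (c, 1),
        Finset.mem_union_right _ (Finset.mem_image_of_mem _ hc), by
          simp [Prod.ext_iff, hbc]⟩
    · exact Finset.mem_add.mpr ⟨(b, 1),
        Finset.mem_union_right _ (Finset.mem_image_of_mem _ hb), (c, 1),
        Finset.mem_union_right _ (Finset.mem_image_of_mem _ hc), by
          simp [Prod.ext_iff, hbc]⟩

lemma two_rows_decompose (hx : ℕ) (A : Finset (ℕ × ℕ))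
    (hA : ∀ p ∈ A, p.1 ≤ hx ∧ p.2 ≤ 1)
    (hcov : ∀ x ≤ 2 * hx, ∀ y ≤ 2, (x, y) ∈ A + A) :
    ∃ B0 B1 : Finset ℕ,
      A.card = B0.card + B1.card ∧
      ((∀ b ∈ B0, b ≤ hx) ∧ ∀ x ≤ 2 * hx, x ∈ B0 + B0) ∧
      ((∀ b ∈ B1, b ≤ hx) ∧ ∀ x ≤ 2 * hx, x ∈ B1 + B1) := by
  refine ⟨(A.filter (fun p => p.2 = 0)).image Prod.fst,
          (A.filter (fun p => p.2 = 1)).image Prod.fst, ?_, ⟨?_, ?_⟩, ⟨?_, ?_⟩⟩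
  · have h0 : ((A.filter (fun p => p.2 = 0)).image Prod.fst).card
        = (A.filter (fun p => p.2 = 0)).card := by
      apply Finset.card_image_of_injOn
      intro p hp q hq h
      simp only [Finset.coe_filter, Set.mem_setOf_eq] at hp hq
      exact Prod.ext h (hp.2.trans hq.2.symm)
    have h1 : ((A.filter (fun p => p.2 = 1)).image Prod.fst).card
        = (A.filter (fun p => p.2 = 1)).card := by
      apply Finset.card_image_of_injOn
      intro p hp q hq h
      simp only [Finset.coe_filter, Set.mem_setOf_eq] at hp hq
      exact Prod.ext h (hp.2.trans hq.2.symm)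
    rw [h0, h1]
    have hne : A.filter (fun p => p.2 = 1) = A.filter (fun p => ¬ p.2 = 0) := by
      apply Finset.filter_congr
      intro p hp
      have := (hA p hp).2
      constructor <;> intro h <;> omega
    rw [hne, Finset.card_filter_add_card_filter_not]
  · intro b hb
    simp only [Finset.mem_image, Finset.mem_filter] at hb
    obtain ⟨p, ⟨hp, _⟩, rfl⟩ := hb
    exact (hA p hp).1
  · intro x hxle
    obtain ⟨p, hp, q, hq, hpq⟩ := Finset.mem_add.mp (hcov x hxle 0 (by omega))
    have h1 : p.2 + q.2 = 0 := congrArg Prod.snd hpq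
    have h2 : p.1 + q.1 = x := congrArg Prod.fst hpq
    refine Finset.mem_add.mpr ⟨p.1, ?_, q.1, ?_, h2⟩
    · exact Finset.mem_image_of_mem _ (Finset.mem_filter.mpr ⟨hp, by omega⟩)
    · exact Finset.mem_image_of_mem _ (Finset.mem_filter.mpr ⟨hq, by omega⟩)
  · intro b hb
    simp only [Finset.mem_image, Finset.mem_filter] at hb
    obtain ⟨p, ⟨hp, _⟩, rfl⟩ := hb
    exact (hA p hp).1
  · intro x hxle
    obtain ⟨p, hp, q, hq, hpq⟩ := Finset.mem_add.mp (hcov x hxle 2 le_rfl)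
    have h1 : p.2 + q.2 = 2 := congrArg Prod.snd hpq
    have h2 : p.1 + q.1 = x := congrArg Prod.fst hpq
    have hp2 := (hA p hp).2
    have hq2 := (hA q hq).2
    refine Finset.mem_add.mpr ⟨p.1, ?_, q.1, ?_, h2⟩
    · exact Finset.mem_image_of_mem _ (Finset.mem_filter.mpr ⟨hp, by omega⟩)
    · exact Finset.mem_image_of_mem _ (Finset.mem_filter.mpr ⟨hq, by omega⟩)

/-- Two rows lemma: `k*(s_x, 2) = 2 · k*(s_x, 0)` for even `s_x = 2h_x`. -/
theorem two_rows (hx : ℕ) :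
    sInf {k : ℕ | ∃ A : Finset (ℕ × ℕ), A.card = k ∧
        (∀ p ∈ A, p.1 ≤ hx ∧ p.2 ≤ 1) ∧
        (∀ x ≤ 2 * hx, ∀ y ≤ 2, (x, y) ∈ A + A)} =
    2 * sInf {k : ℕ | ∃ B : Finset ℕ, B.card = k ∧
        (∀ b ∈ B, b ≤ hx) ∧
        (∀ x ≤ 2 * hx, x ∈ B + B)} := by
  set SA := {k : ℕ | ∃ A : Finset (ℕ × ℕ), A.card = k ∧
        (∀ p ∈ A, p.1 ≤ hx ∧ p.2 ≤ 1) ∧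
        (∀ x ≤ 2 * hx, ∀ y ≤ 2, (x, y) ∈ A + A)} with hSA
  set SB := {k : ℕ | ∃ B : Finset ℕ, B.card = k ∧
        (∀ b ∈ B, b ≤ hx) ∧
        (∀ x ≤ 2 * hx, x ∈ B + B)} with hSB
  have hBne : SB.Nonempty := by
    refine ⟨hx + 1, Finset.range (hx + 1), Finset.card_range _, ?_, ?_⟩
    · intro b hb; simp only [Finset.mem_range] at hb; omega
    · intro x hxle
      refine Finset.mem_add.mpr ⟨min x hx, ?_, x - min x hx, ?_, by omega⟩
      · simp only [Finset.mem_range]; omega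
      · simp only [Finset.mem_range]; omega
  obtain ⟨B, hBcard, hBle, hBcov⟩ := Nat.sInf_mem hBne
  obtain ⟨A, hAcard, hAle, hAcov⟩ := two_rows_construct hx B hBle hBcov
  have hAmem : A.card ∈ SA := ⟨A, rfl, hAle, hAcov⟩
  have h1 : sInf SA ≤ 2 * sInf SB := by
    have := Nat.sInf_le hAmem
    omega
  have hAne : SA.Nonempty := ⟨A.card, hAmem⟩
  obtain ⟨A', hA'card, hA'le, hA'cov⟩ := Nat.sInf_mem hAne
  obtain ⟨B0, B1, hc, h0, h1'⟩ := two_rows_decompose hx A' hA'le hA'cov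
  have hb0 : sInf SB ≤ B0.card := Nat.sInf_le ⟨B0, rfl, h0.1, h0.2⟩
  have hb1 : sInf SB ≤ B1.card := Nat.sInf_le ⟨B1, rfl, h1'.1, h1'.2⟩
  omega
end

section
/- Assume Yu's one-dimensional bound: there exists N₀ such that for every integer n ≥ N₀, every finite set A₀ of non-negative integers with A₀ + A₀ ⊇ [0,n] satisfies n ≤ 0.45851 · |A₀|². Then there exists N₁ such that for every integer s_x ≥ N₁, every finite set A of pairs of non-negative integers with A + A ⊇ [0,s_x] × [0,1] satisfies 2(s_x + 1) < 0.4311 · |A|². -/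
open Pointwise

lemma key_ineq (a b s : ℝ) (ha : 1 ≤ a) (hb : 1 ≤ b) (hs : 100001 ≤ s)
    (h1 : s - 1 ≤ 0.45851 * a ^ 2) (h2 : s ≤ a * b) :
    2 * s < 0.4311 * (a + b) ^ 2 := by
  have ha0 : 0 < a := by linarith
  have hquad : 1.1378 * s * a ^ 2 < 0.4311 * (a ^ 4 + s ^ 2) := by
    nlinarith [sq_nonneg (0.45851 * a ^ 2 - (s - 1)), sq_nonneg (a^2 - s), hs, sq_nonneg a,
      mul_nonneg (le_of_lt ha0) (le_of_lt ha0)]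
  have h3 : (a^2 + s)^2 ≤ ((a + b) * a)^2 := by
    have h4 : a^2 + s ≤ (a + b) * a := by nlinarith
    have h0 : 0 ≤ a^2 + s := by nlinarith
    nlinarith [h4, h0]
  nlinarith [h3, hquad, sq_nonneg a, ha0, mul_pos ha0 ha0]

/-- Theorem (upper bound for height-1 rectangles): assuming Yu's
one-dimensional bound, for all `s_x` large enough every basis for
`[0,s_x] × [0,1]` has efficiency `2(s_x+1)/|A|² < 0.4311`. -/
theorem upper_bound_height_one
    (hYu : ∃ N₀ : ℕ, ∀ n : ℕ, N₀ ≤ n → ∀ A₀ : Finset ℕ,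
      (∀ m ≤ n, m ∈ A₀ + A₀) → (n : ℝ) ≤ 0.45851 * (A₀.card : ℝ) ^ 2) :
    ∃ N₁ : ℕ, ∀ sx : ℕ, N₁ ≤ sx → ∀ A : Finset (ℕ × ℕ),
      (∀ x ≤ sx, ∀ y ≤ 1, (x, y) ∈ A + A) →
      (2 * (sx + 1) : ℝ) < 0.4311 * (A.card : ℝ) ^ 2 := by
  obtain ⟨N₀, hN₀⟩ := hYu
  refine ⟨max N₀ 100000, fun sx hsx A hA => ?_⟩
  have hsx0 : N₀ ≤ sx := le_trans (le_max_left _ _) hsx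
  have hsx1 : 100000 ≤ sx := le_trans (le_max_right _ _) hsx
  set B0 : Finset ℕ := (A.filter (fun p => p.2 = 0)).image Prod.fst with hB0
  set B1 : Finset ℕ := (A.filter (fun p => p.2 = 1)).image Prod.fst with hB1
  -- B0 covers [0, sx]
  have cover0 : ∀ m ≤ sx, m ∈ B0 + B0 := by
    intro m hm
    obtain ⟨p, hp, q, hq, hpq⟩ := Finset.mem_add.1 (hA m hm 0 (Nat.zero_le _))
    have hy : p.2 + q.2 = 0 := by
      have := congrArg Prod.snd hpq; simpa using this
    have hx : p.1 + q.1 = m := by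
      have := congrArg Prod.fst hpq; simpa using this
    refine Finset.mem_add.2 ⟨p.1, ?_, q.1, ?_, hx⟩
    · exact Finset.mem_image.2 ⟨p, Finset.mem_filter.2 ⟨hp, by omega⟩, rfl⟩
    · exact Finset.mem_image.2 ⟨q, Finset.mem_filter.2 ⟨hq, by omega⟩, rfl⟩
  -- Yu's bound
  have hyu : (sx : ℝ) ≤ 0.45851 * (B0.card : ℝ) ^ 2 := hN₀ sx hsx0 B0 cover0
  -- B0 + B1 covers [0, sx]
  have cover1 : ∀ m ≤ sx, m ∈ B0 + B1 := by
    intro m hm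
    obtain ⟨p, hp, q, hq, hpq⟩ := Finset.mem_add.1 (hA m hm 1 le_rfl)
    have hy : p.2 + q.2 = 1 := by
      have := congrArg Prod.snd hpq; simpa using this
    have hx : p.1 + q.1 = m := by
      have := congrArg Prod.fst hpq; simpa using this
    rcases Nat.le_one_iff_eq_zero_or_eq_one.1 (by omega : p.2 ≤ 1) with h0 | h1
    · refine Finset.mem_add.2 ⟨p.1, ?_, q.1, ?_, hx⟩
      · exact Finset.mem_image.2 ⟨p, Finset.mem_filter.2 ⟨hp, h0⟩, rfl⟩
      · exact Finset.mem_image.2 ⟨q, Finset.mem_filter.2 ⟨hq, by omega⟩, rfl⟩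
    · refine Finset.mem_add.2 ⟨q.1, ?_, p.1, ?_, by omega⟩
      · exact Finset.mem_image.2 ⟨q, Finset.mem_filter.2 ⟨hq, by omega⟩, rfl⟩
      · exact Finset.mem_image.2 ⟨p, Finset.mem_filter.2 ⟨hp, h1⟩, rfl⟩
  -- sx + 1 ≤ |B0| * |B1|
  have hsub : Finset.range (sx + 1) ⊆ B0 + B1 := by
    intro m hm
    exact cover1 m (Nat.lt_succ_iff.1 (Finset.mem_range.1 hm))
  have hcard01 : sx + 1 ≤ B0.card * B1.card := by
    calc sx + 1 = (Finset.range (sx + 1)).card := (Finset.card_range _).symm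
      _ ≤ (B0 + B1).card := Finset.card_le_card hsub
      _ ≤ B0.card * B1.card := Finset.card_add_le
  -- |B0| + |B1| ≤ |A|
  have hcards : B0.card + B1.card ≤ A.card := by
    calc B0.card + B1.card
        ≤ (A.filter (fun p => p.2 = 0)).card + (A.filter (fun p => p.2 = 1)).card :=
          Nat.add_le_add Finset.card_image_le Finset.card_image_le
      _ = ((A.filter (fun p => p.2 = 0)) ∪ (A.filter (fun p => p.2 = 1))).card := by
          rw [Finset.card_union_of_disjoint]
          rw [Finset.disjoint_left]
          intro p hp hq
          have h0 := (Finset.mem_filter.1 hp).2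
          have h1 := (Finset.mem_filter.1 hq).2
          omega
      _ ≤ A.card := Finset.card_le_card (Finset.union_subset (Finset.filter_subset _ _)
          (Finset.filter_subset _ _))
  -- nonemptiness
  have hb0 : 1 ≤ B0.card := Finset.card_pos.2 ⟨0, by
    have := cover0 0 (Nat.zero_le _)
    obtain ⟨p, hp, q, hq, hpq⟩ := Finset.mem_add.1 this
    have : p = 0 := by omega
    simpa [this] using hp⟩
  have hb1 : 1 ≤ B1.card := Finset.card_pos.2 ⟨0, by
    have := cover1 0 (Nat.zero_le _)
    obtain ⟨p, hp, q, hq, hpq⟩ := Finset.mem_add.1 this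
    have : q = 0 := by omega
    simpa [this] using hq⟩
  -- assemble
  have key := key_ineq (B0.card : ℝ) (B1.card : ℝ) ((sx : ℝ) + 1)
    (by exact_mod_cast hb0) (by exact_mod_cast hb1)
    (by push_cast; linarith [show (100000 : ℝ) ≤ sx from by exact_mod_cast hsx1])
    (by push_cast; linarith) (by push_cast at hcard01 ⊢; exact_mod_cast hcard01)
  have hle : ((B0.card : ℝ) + B1.card) ^ 2 ≤ (A.card : ℝ) ^ 2 := by
    have : (B0.card : ℝ) + B1.card ≤ A.card := by exact_mod_cast hcards
    have h0 : (0 : ℝ) ≤ (B0.card : ℝ) + B1.card := by positivity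
    nlinarith
  calc (2 * (sx + 1) : ℝ) < 0.4311 * ((B0.card : ℝ) + B1.card) ^ 2 := key
    _ ≤ 0.4311 * (A.card : ℝ) ^ 2 := by nlinarith [hle]
end

section
/- Assume Yu's one-dimensional bound: there exists N₀ such that for every integer n ≥ N₀, every finite set A₀ of non-negative integers with A₀ + A₀ ⊇ [0,n] satisfies n ≤ 0.45851 · |A₀|². Then there exists N₁ such that for every integer s_x ≥ N₁, every finite set A of pairs of non-negative integers with A + A ⊇ [0,s_x] × [0,2] satisfies 3(s_x + 1) < 0.4190 · |A|². -/
open Pointwise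

set_option maxHeartbeats 1000000


set_option maxHeartbeats 1000000

lemma key_real (s a b c : ℝ) (hs : (10:ℝ)^12 ≤ s) (ha : 1 ≤ a) (hb : 0 ≤ b) (hc : 0 ≤ c)
    (h1 : s - 1 ≤ 0.45851 * a^2) (h2 : s ≤ a*b) (h3 : 2*s ≤ 2*(a*c) + b^2 + b) :
    3*s < 0.419*(a+b+c)^2 := by
  by_contra hcon
  push_neg at hcon
  have ha0 : (0:ℝ) < a := by linarith
  have hs0 : (0:ℝ) < s := by linarith
  have hssq : 10^12 * s ≤ s^2 := by
    nlinarith [mul_nonneg (by linarith : (0:ℝ) ≤ s - 10^12) hs0.le]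
  rcases le_or_gt (2*s) ((b+c)^2 + (b+c)) with hcase | hcase
  · -- Case 1: b+c is large
    rcases le_or_gt (b+c) (0.5*s) with hu2 | hu2
    · have h2s : (0:ℝ) ≤ 2*s - (b+c) := by linarith
      have hbc0 : (0:ℝ) ≤ b + c := by linarith
      have hs1 : (0:ℝ) ≤ s - 1 := by linarith
      have H : (s-1)*(2*s-(b+c)) ≤ (0.45851*a^2)*((b+c)^2) := by
        have h2' : 2*s - (b+c) ≤ (b+c)^2 := by linarith
        exact mul_le_mul h1 h2' h2s (by positivity)
      have Hau : 1.8*s ≤ a*(b+c) := by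
        by_contra hq
        push_neg at hq
        have hX2 : (a*(b+c))*(a*(b+c)) < (1.8*s)*(1.8*s) :=
          mul_self_lt_mul_self (mul_nonneg ha0.le hbc0) hq
        have Hprod : (0:ℝ) ≤ (s-1)*(0.5*s - (b+c)) :=
          mul_nonneg hs1 (by linarith)
        linarith [H, hX2, Hprod, hssq, hs0]
      linarith [hcon, h1, hcase, Hau, hu2, hs]
    · have h1' : (0:ℝ) < (b+c) - 0.5*s := by linarith
      have h2' : (0:ℝ) < (b+c) + 0.5*s := by linarith
      have hu2sq := mul_pos h1' h2'
      have haau : (0:ℝ) ≤ a*(a + 2*(b+c)) :=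
        mul_nonneg ha0.le (by linarith)
      linarith [hcon, hu2sq, haau, hssq, hs0]
  · -- Case 2
    have hbu : b ≤ b + c := by linarith
    have hsec : (0:ℝ) ≤ (a*b - s)*((b+c) - b) := mul_nonneg (by linarith) (by linarith)
    have e1 : 2*s*a ≤ (2*(a*c) + b^2 + b)*a := mul_le_mul_of_nonneg_right h3 ha0.le
    have estar : 2*s*a ≤ 2*a^2*(b+c) - 2*a^2*b + a*b*(b+c) - s*(b+c) + s*b + a*b := by
      linarith [e1, hsec]
    rcases le_or_gt (s + a*(b+c) + a) (2*a^2) with hg | hg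
    · -- gamma' >= 0 branch
      have e3 : (a*b - s)*(a*(b+c) + s + a - 2*a^2) ≤ 0 :=
        mul_nonpos_of_nonneg_of_nonpos (by linarith) (by linarith)
      have estara := mul_le_mul_of_nonneg_right estar ha0.le
      have H5 : 4*a^2*s ≤ 2*a^3*(b+c) + s^2 + s*a := by linarith [estara, e3]
      -- set up r = sqrt((s-1)/0.45851)
      set r := Real.sqrt ((s-1)/0.45851) with hrdef
      have hr0 : (0:ℝ) ≤ r := Real.sqrt_nonneg _
      have hr2 : r^2 = (s-1)/0.45851 := Real.sq_sqrt (div_nonneg (by linarith) (by norm_num))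
      have heq : 0.45851 * r^2 = s - 1 := by rw [hr2]; field_simp
      have hrge : (100000:ℝ) ≤ r := by
        by_contra hq
        push_neg at hq
        have h5 : r*r < 100000*100000 := mul_self_lt_mul_self hr0 hq
        nlinarith [heq, hs, h5]
      have har : r ≤ a := by
        have h1' : (s-1)/0.45851 ≤ a^2 := by linarith
        calc r ≤ Real.sqrt (a^2) := Real.sqrt_le_sqrt h1'
          _ = a := Real.sqrt_sq ha0.le
      have hs2 : s = 0.45851*r^2 + 1 := by linarith
      have hrr := mul_le_mul_of_nonneg_right har hr0
      have h2ar : 2*s ≤ a*r := by nlinarith [heq, hs, hrr]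
      have hbr : (0:ℝ) ≤ 2*a^3*r^3 - 4*s*a^2*r^2 + s^2*(a^2+a*r+r^2) + s*a*r*(a+r) := by
        have t1 : (0:ℝ) ≤ (a^2*r^2)*(a*r - 2*s) :=
          mul_nonneg (by positivity) (by linarith)
        have t2 : (0:ℝ) ≤ s^2*(a^2+a*r+r^2) := by positivity
        have t3 : (0:ℝ) ≤ s*(a*(r*(a+r))) := by positivity
        linarith [t1, t2, t3]
      have e4 : (2*r^4 + 4*s*r^2 - s^2 - s*r) * a^3 ≤ (2*a^4 + 4*s*a^2 - s^2 - s*a) * r^3 := by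
        have hprod : (0:ℝ) ≤ (a - r)*(2*a^3*r^3 - 4*s*a^2*r^2 + s^2*(a^2+a*r+r^2) + s*a*r*(a+r)) :=
          mul_nonneg (by linarith) hbr
        linarith [hprod]
      have hr1 : (1:ℝ) ≤ r := by linarith
      have pw : ∀ n : ℕ, (0:ℝ) ≤ r^n := fun n => pow_nonneg hr0 n
      have hr10 : (0:ℝ) ≤ r - 1 := by linarith
      have hr21 : (0:ℝ) ≤ r^2 - 1 := by nlinarith [hr10, hr1]
      have hr41 : (0:ℝ) ≤ r^4 - 1 := by
        have := mul_nonneg hr21 (by positivity : (0:ℝ) ≤ r^2 + 1); linarith [this]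
      have hr51 : (0:ℝ) ≤ r^5 - 1 := by
        have := mul_nonneg hr41 hr0; linarith [this, hr10]
      have hP : 0 < 2*r^4 + 4*s*r^2 - s^2 - s*r := by
        rw [hs2]
        have m43 : (0:ℝ) ≤ r^3*(r-1) := mul_nonneg (pw 3) hr10
        have m21 : (0:ℝ) ≤ r*(r-1) := mul_nonneg hr0 hr10
        linarith [m43, m21, hr21, pw 3, pw 2, hr1]
      have Qpos : 12*s*r^6 < 0.419*(2*r^4 + 4*s*r^2 - s^2 - s*r)^2 := by
        rw [hs2]
        have F7 : (0:ℝ) ≤ r^7*(r - 100000) := mul_nonneg (pw 7) (by linarith)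
        have G6 : (0:ℝ) ≤ r^6*(r - 1) := mul_nonneg (pw 6) hr10
        have G5 : (0:ℝ) ≤ r^5*(r^2 - 1) := mul_nonneg (pw 5) hr21
        have G3 : (0:ℝ) ≤ r^3*(r^4 - 1) := mul_nonneg (pw 3) hr41
        have G2 : (0:ℝ) ≤ r^2*(r^5 - 1) := mul_nonneg (pw 2) hr51
        have P7 : (0:ℝ) < r^7 := pow_pos (by linarith) 7
        linarith [F7, G6, G5, G3, G2, P7, pw 4, hr0]
      -- combine
      have H5' : 2*a^4+4*s*a^2-s^2-s*a ≤ 2*a^4+2*a^3*(b+c) := by linarith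
      have e5 : (2*r^4+4*s*r^2-s^2-s*r) * a^3 ≤ (2*(a+b+c)*r^3) * a^3 := by
        have := mul_le_mul_of_nonneg_right H5' (pw 3)
        linarith [e4, this]
      have hPle : 2*r^4+4*s*r^2-s^2-s*r ≤ 2*(a+b+c)*r^3 :=
        le_of_mul_le_mul_right e5 (pow_pos ha0 3)
      have hsq := mul_self_le_mul_self hP.le hPle
      have hcon4 := mul_le_mul_of_nonneg_right hcon (by positivity : (0:ℝ) ≤ 4*r^6)
      linarith [Qpos, hsq, hcon4]
    · -- gamma' < 0 branch: contradiction with hcase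
      have e3' : b*(a*(b+c) + s + a - 2*a^2) ≤ (b+c)*(a*(b+c) + s + a - 2*a^2) :=
        mul_le_mul_of_nonneg_right hbu (by linarith)
      linarith [estar, e3', mul_lt_mul_of_pos_left hcase ha0]



lemma card_add_self_le (s : Finset ℕ) : (s + s).card ≤ s.card * (s.card + 1) / 2 := by
  classical
  have hsub : s + s ⊆ s.sym2.image (Sym2.lift ⟨(· + ·), fun a b => Nat.add_comm a b⟩) := by
    intro x hx
    obtain ⟨y, hy, z, hz, rfl⟩ := Finset.mem_add.1 hx
    exact Finset.mem_image.2 ⟨s(y, z), Finset.mk_mem_sym2_iff.2 ⟨hy, hz⟩, rfl⟩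
  calc (s + s).card ≤ _ := Finset.card_le_card hsub
    _ ≤ s.sym2.card := Finset.card_image_le
    _ = Nat.choose (s.card + 1) 2 := Finset.card_sym2 s
    _ = s.card * (s.card + 1) / 2 := by
        rw [Nat.choose_two_right, Nat.add_sub_cancel, Nat.mul_comm]

/-- Theorem (upper bound for height-2 rectangles): assuming Yu's
one-dimensional bound, for all `s_x` large enough every basis for
`[0,s_x] × [0,2]` has efficiency `3(s_x+1)/|A|² < 0.4190`. -/
theorem upper_bound_height_two
    (hYu : ∃ N₀ : ℕ, ∀ n : ℕ, N₀ ≤ n → ∀ A₀ : Finset ℕ,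
      (∀ m ≤ n, m ∈ A₀ + A₀) → (n : ℝ) ≤ 0.45851 * (A₀.card : ℝ) ^ 2) :
    ∃ N₁ : ℕ, ∀ sx : ℕ, N₁ ≤ sx → ∀ A : Finset (ℕ × ℕ),
      (∀ x ≤ sx, ∀ y ≤ 2, (x, y) ∈ A + A) →
      (3 * (sx + 1) : ℝ) < 0.4190 * (A.card : ℝ) ^ 2 := by
  classical
  obtain ⟨N₀, hYu⟩ := hYu
  refine ⟨max N₀ (10^12), fun sx hsx A hA => ?_⟩
  have hsxN₀ : N₀ ≤ sx := le_trans (le_max_left _ _) hsx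
  have hsx12 : (10:ℕ)^12 ≤ sx := le_trans (le_max_right _ _) hsx
  set B0 : Finset ℕ := (A.filter (fun p => p.2 = 0)).image Prod.fst with hB0
  set B1 : Finset ℕ := (A.filter (fun p => p.2 = 1)).image Prod.fst with hB1
  set B2 : Finset ℕ := (A.filter (fun p => p.2 = 2)).image Prod.fst with hB2
  have memB : ∀ (p : ℕ × ℕ) (y : ℕ), p ∈ A → p.2 = y →
      p.1 ∈ (A.filter (fun q => q.2 = y)).image Prod.fst := by
    intro p y hp hy
    exact Finset.mem_image.2 ⟨p, Finset.mem_filter.2 ⟨hp, hy⟩, rfl⟩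
  -- row 0
  have row0 : ∀ m ≤ sx, m ∈ B0 + B0 := by
    intro m hm
    obtain ⟨p, hp, q, hq, hpq⟩ := Finset.mem_add.1 (hA m hm 0 (by norm_num))
    have h1 : p.1 + q.1 = m := congrArg Prod.fst hpq
    have h2 : p.2 + q.2 = 0 := congrArg Prod.snd hpq
    have hp2 : p.2 = 0 := by omega
    have hq2 : q.2 = 0 := by omega
    exact h1 ▸ Finset.add_mem_add (memB p 0 hp hp2) (memB q 0 hq hq2)
  -- row 1
  have row1 : ∀ m ≤ sx, m ∈ B0 + B1 := by
    intro m hm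
    obtain ⟨p, hp, q, hq, hpq⟩ := Finset.mem_add.1 (hA m hm 1 (by norm_num))
    have h1 : p.1 + q.1 = m := congrArg Prod.fst hpq
    have h2 : p.2 + q.2 = 1 := congrArg Prod.snd hpq
    rcases Nat.le_one_iff_eq_zero_or_eq_one.1 (by omega : p.2 ≤ 1) with hp2 | hp2
    · have hq2 : q.2 = 1 := by omega
      exact h1 ▸ Finset.add_mem_add (memB p 0 hp hp2) (memB q 1 hq hq2)
    · have hq2 : q.2 = 0 := by omega
      have : q.1 + p.1 = m := by omega
      exact this ▸ Finset.add_mem_add (memB q 0 hq hq2) (memB p 1 hp hp2)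
  -- row 2
  have row2 : ∀ m ≤ sx, m ∈ (B0 + B2) ∪ (B1 + B1) := by
    intro m hm
    obtain ⟨p, hp, q, hq, hpq⟩ := Finset.mem_add.1 (hA m hm 2 (by norm_num))
    have h1 : p.1 + q.1 = m := congrArg Prod.fst hpq
    have h2 : p.2 + q.2 = 2 := congrArg Prod.snd hpq
    rcases (by omega : p.2 = 0 ∧ q.2 = 2 ∨ p.2 = 1 ∧ q.2 = 1 ∨ p.2 = 2 ∧ q.2 = 0) with
      ⟨hp2, hq2⟩ | ⟨hp2, hq2⟩ | ⟨hp2, hq2⟩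
    · exact Finset.mem_union_left _ (h1 ▸ Finset.add_mem_add (memB p 0 hp hp2) (memB q 2 hq hq2))
    · exact Finset.mem_union_right _ (h1 ▸ Finset.add_mem_add (memB p 1 hp hp2) (memB q 1 hq hq2))
    · have : q.1 + p.1 = m := by omega
      exact Finset.mem_union_left _ (this ▸ Finset.add_mem_add (memB q 0 hq hq2) (memB p 2 hp hp2))
  -- Yu's bound for B0
  have hYuB0 : (sx : ℝ) ≤ 0.45851 * (B0.card : ℝ)^2 := hYu sx hsxN₀ B0 row0
  -- B0 nonempty
  have hB0ne : 1 ≤ B0.card := by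
    obtain ⟨y, hy, z, hz, _⟩ := Finset.mem_add.1 (row0 0 (Nat.zero_le _))
    exact Finset.card_pos.2 ⟨y, hy⟩
  -- Icc cardinalities
  have hIcc : (Finset.Icc 0 sx).card = sx + 1 := by
    rw [Nat.card_Icc]; omega
  -- row 1 count
  have hcount1 : sx + 1 ≤ B0.card * B1.card := by
    calc sx + 1 = (Finset.Icc 0 sx).card := hIcc.symm
      _ ≤ (B0 + B1).card := Finset.card_le_card (fun m hm => row1 m (Finset.mem_Icc.1 hm).2)
      _ ≤ B0.card * B1.card := Finset.card_add_le
  -- row 2 count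
  have hcount2 : 2 * (sx + 1) ≤ 2 * (B0.card * B2.card) + B1.card * (B1.card + 1) := by
    have step : sx + 1 ≤ B0.card * B2.card + B1.card * (B1.card + 1) / 2 := by
      calc sx + 1 = (Finset.Icc 0 sx).card := hIcc.symm
        _ ≤ ((B0 + B2) ∪ (B1 + B1)).card :=
            Finset.card_le_card (fun m hm => row2 m (Finset.mem_Icc.1 hm).2)
        _ ≤ (B0 + B2).card + (B1 + B1).card := Finset.card_union_le _ _
        _ ≤ B0.card * B2.card + B1.card * (B1.card + 1) / 2 :=
            Nat.add_le_add Finset.card_add_le (card_add_self_le B1)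
    omega
  -- cardinal count
  have hcards : B0.card + B1.card + B2.card ≤ A.card := by
    have h0 : B0.card ≤ (A.filter (fun p => p.2 = 0)).card := Finset.card_image_le
    have h1 : B1.card ≤ (A.filter (fun p => p.2 = 1)).card := Finset.card_image_le
    have h2 : B2.card ≤ (A.filter (fun p => p.2 = 2)).card := Finset.card_image_le
    have hd01 : Disjoint (A.filter (fun p => p.2 = 0)) (A.filter (fun p => p.2 = 1)) := by
      apply Finset.disjoint_left.2
      intro p hp hq
      simp only [Finset.mem_filter] at hp hq
      omega
    have hd012 : Disjoint (A.filter (fun p => p.2 = 0) ∪ A.filter (fun p => p.2 = 1))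
        (A.filter (fun p => p.2 = 2)) := by
      apply Finset.disjoint_left.2
      intro p hp hq
      simp only [Finset.mem_union, Finset.mem_filter] at hp hq
      omega
    have hsub : (A.filter (fun p => p.2 = 0) ∪ A.filter (fun p => p.2 = 1))
        ∪ A.filter (fun p => p.2 = 2) ⊆ A := by
      intro p hp
      simp only [Finset.mem_union, Finset.mem_filter] at hp
      tauto
    calc B0.card + B1.card + B2.card
        ≤ (A.filter (fun p => p.2 = 0)).card + (A.filter (fun p => p.2 = 1)).card
            + (A.filter (fun p => p.2 = 2)).card := by omega
      _ = ((A.filter (fun p => p.2 = 0) ∪ A.filter (fun p => p.2 = 1))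
            ∪ A.filter (fun p => p.2 = 2)).card := by
          rw [Finset.card_union_of_disjoint hd012, Finset.card_union_of_disjoint hd01]
      _ ≤ A.card := Finset.card_le_card hsub
  -- apply key_real
  have key := key_real ((sx : ℝ) + 1) (B0.card : ℝ) (B1.card : ℝ) (B2.card : ℝ)
    (by push_cast; have : ((10:ℕ)^12 : ℝ) ≤ (sx : ℝ) := by exact_mod_cast Nat.cast_le.2 hsx12
        push_cast at this; linarith)
    (by exact_mod_cast hB0ne) (by positivity) (by positivity)
    (by push_cast; linarith [hYuB0])
    (by exact_mod_cast hcount1)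
    (by have h := (Nat.cast_le (α := ℝ)).2 hcount2; push_cast at h ⊢; nlinarith [h])
  have hmono : ((B0.card : ℝ) + B1.card + B2.card)^2 ≤ (A.card : ℝ)^2 := by
    have h1 : ((B0.card : ℝ) + B1.card + B2.card) ≤ (A.card : ℝ) := by exact_mod_cast hcards
    have h2 : (0:ℝ) ≤ (B0.card : ℝ) + B1.card + B2.card := by positivity
    nlinarith [h1, h2]
  have : (0.4190 : ℝ) = 0.419 := by norm_num
  push_cast
  nlinarith [key, hmono]
end

section
/- Assume Yu's one-dimensional restricted bound: there exists N₀ such that for every even integer n ≥ N₀, every finite set B ⊆ [0,n/2] of integers with B + B ⊇ [0,n] satisfies n ≤ 0.41983 · |B|². Then there exists N₁ such that for every even integer s_x ≥ N₁, every finite set A ⊆ [0,s_x/2] × [0,1] of integer pairs with A + A ⊇ [0,s_x] × [0,2] satisfies 3(s_x + 1) < 0.3149 · |A|². -/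
open Pointwise

/-- Theorem (restricted upper bound for height-2 rectangles): assuming Yu's
one-dimensional restricted bound, for all even `s_x` large enough every
restricted basis for `[0,s_x] × [0,2]` has efficiency
`3(s_x+1)/|A|² < 0.3149`. -/
theorem restricted_upper_bound_height_two
    (hYu : ∃ N₀ : ℕ, ∀ n : ℕ, N₀ ≤ n → Even n → ∀ B : Finset ℕ,
      (∀ b ∈ B, b ≤ n / 2) → (∀ m ≤ n, m ∈ B + B) →
      (n : ℝ) ≤ 0.41983 * (B.card : ℝ) ^ 2) :
    ∃ N₁ : ℕ, ∀ sx : ℕ, N₁ ≤ sx → Even sx → ∀ A : Finset (ℕ × ℕ),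
      (∀ p ∈ A, p.1 ≤ sx / 2 ∧ p.2 ≤ 1) →
      (∀ x ≤ sx, ∀ y ≤ 2, (x, y) ∈ A + A) →
      (3 * (sx + 1) : ℝ) < 0.3149 * (A.card : ℝ) ^ 2 := by
  obtain ⟨N₀, hN₀⟩ := hYu
  refine ⟨N₀ + 20000, fun sx hsx hev A hA hAdd => ?_⟩
  set A0 := A.filter (fun p => p.2 = 0) with hA0def
  set A1 := A.filter (fun p => p.2 = 1) with hA1def
  set B0 := A0.image Prod.fst with hB0def
  set B1 := A1.image Prod.fst with hB1def
  have hB0card : B0.card = A0.card := by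
    apply Finset.card_image_of_injOn
    intro p hp q hq h
    simp only [hA0def, Finset.coe_filter, Set.mem_setOf_eq] at hp hq
    exact Prod.ext h (hp.2.trans hq.2.symm)
  have hB1card : B1.card = A1.card := by
    apply Finset.card_image_of_injOn
    intro p hp q hq h
    simp only [hA1def, Finset.coe_filter, Set.mem_setOf_eq] at hp hq
    exact Prod.ext h (hp.2.trans hq.2.symm)
  have hcard : A.card = A0.card + A1.card := by
    have h1 : A.filter (fun p => ¬ p.2 = 0) = A1 := by
      apply Finset.filter_congr
      intro p hp
      have := (hA p hp).2
      omega
    rw [hA0def, ← h1]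
    exact (Finset.card_filter_add_card_filter_not _).symm
  -- B0 is a 1D restricted basis
  have h0 : (sx : ℝ) ≤ 0.41983 * (B0.card : ℝ) ^ 2 := by
    apply hN₀ sx (by omega) hev
    · intro b hb
      rw [hB0def, Finset.mem_image] at hb
      obtain ⟨p, hp, rfl⟩ := hb
      exact (hA p (Finset.mem_filter.mp hp).1).1
    · intro m hm
      obtain ⟨p, hp, q, hq, hpq⟩ := Finset.mem_add.mp (hAdd m hm 0 (by omega))
      have h2 : p.2 + q.2 = 0 := congrArg Prod.snd hpq
      have h1 : p.1 + q.1 = m := congrArg Prod.fst hpq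
      refine Finset.mem_add.mpr ⟨p.1, ?_, q.1, ?_, h1⟩
      · exact Finset.mem_image_of_mem _ (Finset.mem_filter.mpr ⟨hp, by omega⟩)
      · exact Finset.mem_image_of_mem _ (Finset.mem_filter.mpr ⟨hq, by omega⟩)
  have h1 : (sx : ℝ) ≤ 0.41983 * (B1.card : ℝ) ^ 2 := by
    apply hN₀ sx (by omega) hev
    · intro b hb
      rw [hB1def, Finset.mem_image] at hb
      obtain ⟨p, hp, rfl⟩ := hb
      exact (hA p (Finset.mem_filter.mp hp).1).1
    · intro m hm
      obtain ⟨p, hp, q, hq, hpq⟩ := Finset.mem_add.mp (hAdd m hm 2 (by omega))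
      have h2 : p.2 + q.2 = 2 := congrArg Prod.snd hpq
      have h1 : p.1 + q.1 = m := congrArg Prod.fst hpq
      have hp2 := (hA p hp).2
      have hq2 := (hA q hq).2
      refine Finset.mem_add.mpr ⟨p.1, ?_, q.1, ?_, h1⟩
      · exact Finset.mem_image_of_mem _ (Finset.mem_filter.mpr ⟨hp, by omega⟩)
      · exact Finset.mem_image_of_mem _ (Finset.mem_filter.mpr ⟨hq, by omega⟩)
  have hAc : (A.card : ℝ) = (B0.card : ℝ) + (B1.card : ℝ) := by
    rw [hB0card, hB1card]
    exact_mod_cast congrArg (fun n : ℕ => (n : ℝ)) hcard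
  have hsx' : (20000 : ℝ) ≤ (sx : ℝ) := by exact_mod_cast (by omega : (20000:ℕ) ≤ sx)
  set a := (B0.card : ℝ)
  set b := (B1.card : ℝ)
  have ha0 : 0 ≤ a := Nat.cast_nonneg _
  have hb0 : 0 ≤ b := Nat.cast_nonneg _
  rw [hAc]
  nlinarith [sq_nonneg (a - b), sq_nonneg (a + b), mul_nonneg ha0 hb0,
    mul_le_mul h0 h1 (by positivity) (by positivity)]
end

section
/- Assume Yu's one-dimensional restricted bound: there exists N₀ such that for every even integer n ≥ N₀, every finite set B ⊆ [0,n/2] of integers with B + B ⊇ [0,n] satisfies n ≤ 0.41983 · |B|². Then there exists N₁ such that for every even integer s_x ≥ N₁, every finite set A ⊆ [0,s_x/2] × [0,2] of integer pairs with A + A ⊇ [0,s_x] × [0,4] satisfies 5(s_x + 1) < 0.3585 · |A|². -/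
/-!
Split a restricted basis `A` of `[0,s] × [0,4]` into its rows `R₀, R₁, R₂` by height.
Heights `0` and `4` of `A + A` are reached only as `R₀ + R₀` and `R₂ + R₂`, so Yu's bound gives
`s ≤ c|R₀|²` and `s ≤ c|R₂|²` with `c = 0.41983`; height `1` is reached only as `R₀ + R₁`, so
`s + 1 ≤ |R₀||R₁|`. With `t = √(s/c)` this forces `|R₀| + |R₁| ≥ (1 + c)t`, hence
`|A| ≥ (2 + c)t`, and `0.3585 (2 + c)² / c > 5`.
-/

open Pointwise Finset

namespace RestrictedBasis

variable {α β : Type*} [DecidableEq α] [DecidableEq β]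

def row (A : Finset (α × β)) (j : β) : Finset α :=
  {p ∈ A | p.2 = j}.image Prod.fst

variable {A : Finset (α × β)}

lemma mem_row {p : α × β} (hp : p ∈ A) : p.1 ∈ row A p.2 :=
  mem_image_of_mem _ (mem_filter.mpr ⟨hp, rfl⟩)

lemma le_of_mem_row [LE α] {b : α} {j : β} {m : α} (hA : ∀ p ∈ A, p.1 ≤ m)
    (hb : b ∈ row A j) : b ≤ m := by
  obtain ⟨p, hp, rfl⟩ := mem_image.mp hb
  exact hA p (mem_filter.mp hp).1

lemma sum_card_row_le {t : Finset β} (hA : ∀ p ∈ A, p.2 ∈ t) :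
    ∑ j ∈ t, #(row A j) ≤ #A := by
  rw [card_eq_sum_card_fiberwise (f := Prod.snd) hA]
  exact sum_le_sum fun _ _ => card_image_le

lemma exists_mem_row_add_row [Add α] [Add β] {x : α} {y : β} (h : (x, y) ∈ A + A) :
    ∃ i j, i + j = y ∧ x ∈ row A i + row A j := by
  obtain ⟨p, hp, q, hq, hpq⟩ := mem_add.mp h
  obtain ⟨rfl, rfl⟩ := Prod.ext_iff.mp hpq
  exact ⟨p.2, q.2, rfl, add_mem_add (mem_row hp) (mem_row hq)⟩

end RestrictedBasis

open RestrictedBasis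

section HeightFour

variable {A : Finset (ℕ × ℕ)} {x : ℕ}

lemma mem_row_zero_add_row_zero (h : (x, 0) ∈ A + A) : x ∈ row A 0 + row A 0 := by
  obtain ⟨i, j, hij, hx⟩ := exists_mem_row_add_row h
  obtain ⟨rfl, rfl⟩ : i = 0 ∧ j = 0 := by omega
  exact hx

lemma mem_row_zero_add_row_one (h : (x, 1) ∈ A + A) : x ∈ row A 0 + row A 1 := by
  obtain ⟨i, j, hij, hx⟩ := exists_mem_row_add_row h
  obtain ⟨rfl, rfl⟩ | ⟨rfl, rfl⟩ : i = 0 ∧ j = 1 ∨ i = 1 ∧ j = 0 := by omega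
  · exact hx
  · rwa [add_comm]

lemma mem_row_two_add_row_two (hA : ∀ p ∈ A, p.2 ≤ 2) (h : (x, 4) ∈ A + A) :
    x ∈ row A 2 + row A 2 := by
  obtain ⟨i, j, hij, hx⟩ := exists_mem_row_add_row h
  have height_le {k : ℕ} (hk : (row A k).Nonempty) : k ≤ 2 := by
    obtain ⟨b, hb⟩ := hk
    obtain ⟨p, hp, -⟩ := mem_image.mp hb
    exact (mem_filter.mp hp).2 ▸ hA p (mem_filter.mp hp).1
  obtain ⟨a, ha, b, hb, -⟩ := mem_add.mp hx
  have := height_le ⟨a, ha⟩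
  have := height_le ⟨b, hb⟩
  obtain ⟨rfl, rfl⟩ : i = 2 ∧ j = 2 := by omega
  exact hx

end HeightFour

lemma one_add_mul_le_add {c t u v : ℝ} (hc : c ≤ 1) (ht : 0 < t) (htu : t ≤ u)
    (huv : c * t ^ 2 ≤ u * v) : (1 + c) * t ≤ u + v := by
  have hfac : 0 ≤ (u - t) * (u - c * t) := mul_nonneg (by linarith) (by nlinarith)
  nlinarith [mul_pos ht (ht.trans_le htu)]

lemma five_mul_lt_of_rows {s u v w k : ℝ} (hs : 10 ^ 6 ≤ s) (hu : 0 ≤ u) (hw : 0 ≤ w)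
    (hsu : s ≤ 0.41983 * u ^ 2) (hsw : s ≤ 0.41983 * w ^ 2) (hsuv : s + 1 ≤ u * v)
    (hk : u + v + w ≤ k) : 5 * (s + 1) < 0.3585 * k ^ 2 := by
  set t := √(s / 0.41983)
  have hst : 0.41983 * t ^ 2 = s := by
    rw [Real.sq_sqrt (by positivity)]
    field_simp
  have ht : 0 < t := Real.sqrt_pos.mpr (by positivity)
  have htu : t ≤ u := (Real.sqrt_le_left hu).mpr ((div_le_iff₀' (by norm_num)).mpr hsu)
  have htw : t ≤ w := (Real.sqrt_le_left hw).mpr ((div_le_iff₀' (by norm_num)).mpr hsw)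
  have huv := one_add_mul_le_add (c := 0.41983) (v := v) (by norm_num) ht htu (by linarith)
  have hkt : (2 + 0.41983) * t ≤ k := by linarith
  nlinarith [mul_le_mul hkt hkt (by positivity) (by linarith)]

/-- Theorem (restricted upper bound for height-4 rectangles): assuming Yu's
one-dimensional restricted bound, for all even `s_x` large enough every
restricted basis for `[0,s_x] × [0,4]` has efficiency
`5(s_x+1)/|A|² < 0.3585`. -/
theorem restricted_upper_bound_height_four
    (hYu : ∃ N₀ : ℕ, ∀ n : ℕ, N₀ ≤ n → Even n → ∀ B : Finset ℕ,
      (∀ b ∈ B, b ≤ n / 2) → (∀ m ≤ n, m ∈ B + B) →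
      (n : ℝ) ≤ 0.41983 * (B.card : ℝ) ^ 2) :
    ∃ N₁ : ℕ, ∀ sx : ℕ, N₁ ≤ sx → Even sx → ∀ A : Finset (ℕ × ℕ),
      (∀ p ∈ A, p.1 ≤ sx / 2 ∧ p.2 ≤ 2) →
      (∀ x ≤ sx, ∀ y ≤ 4, (x, y) ∈ A + A) →
      (5 * (sx + 1) : ℝ) < 0.3585 * (A.card : ℝ) ^ 2 := by
  obtain ⟨N₀, hYu⟩ := hYu
  refine ⟨max N₀ (10 ^ 6), fun sx hsx hev A hA hcov => ?_⟩
  have hN₀ : N₀ ≤ sx := le_of_max_le_left hsx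
  have hsx' : (10 ^ 6 : ℝ) ≤ sx := by exact_mod_cast le_of_max_le_right hsx
  have hrow_le (j : ℕ) : ∀ b ∈ row A j, b ≤ sx / 2 := fun _ => le_of_mem_row fun p hp => (hA p hp).1
  have h₀ := hYu sx hN₀ hev _ (hrow_le 0) fun m hm =>
    mem_row_zero_add_row_zero (hcov m hm 0 (by norm_num))
  have h₂ := hYu sx hN₀ hev _ (hrow_le 2) fun m hm =>
    mem_row_two_add_row_two (fun p hp => (hA p hp).2) (hcov m hm 4 le_rfl)
  have h₁ : sx + 1 ≤ #(row A 0) * #(row A 1) := by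
    calc sx + 1 = #(range (sx + 1)) := (card_range _).symm
      _ ≤ #(row A 0 + row A 1) := card_le_card fun m hm =>
          mem_row_zero_add_row_one (hcov m (Nat.lt_succ_iff.mp (mem_range.mp hm)) 1 (by norm_num))
      _ ≤ _ := card_add_le
  have hcard : ∑ j ∈ range 3, #(row A j) ≤ #A :=
    sum_card_row_le fun p hp => mem_range.mpr (Nat.lt_succ_of_le (hA p hp).2)
  simp only [sum_range_succ, sum_range_zero, zero_add] at hcard
  exact five_mul_lt_of_rows (v := #(row A 1)) hsx' (Nat.cast_nonneg _) (Nat.cast_nonneg _) h₀ h₂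
    (by exact_mod_cast h₁) (by exact_mod_cast hcard)
end

section
/- Let t_x, t_y ≥ 1 be integers and let A = B ∪ C be the dense-sparse basis with parameters t_x, t_y, where B = [0,t_x−1] × [0,t_y−1] and C = {(i·t_x, j·t_y) : 0 ≤ i ≤ t_x−1, 0 ≤ j ≤ t_y−1}. Then |A| = 2·t_x·t_y − 1 and A + A ⊇ [0, t_x²−1] × [0, t_y²−1]. -/
open Pointwise

/-- Dense-sparse basis: with parameters `t_x, t_y ≥ 1`, the set
`A = B ∪ C` with `B = [0,t_x−1] × [0,t_y−1]` and
`C = {(i·t_x, j·t_y) : 0 ≤ i ≤ t_x−1, 0 ≤ j ≤ t_y−1}` has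
`|A| = 2·t_x·t_y − 1` and `A + A ⊇ [0,t_x²−1] × [0,t_y²−1]`. -/
theorem dense_sparse_basis (tx ty : ℕ) (htx : 1 ≤ tx) (hty : 1 ≤ ty)
    (A : Finset (ℕ × ℕ))
    (hA : A = (Finset.Icc 0 (tx - 1) ×ˢ Finset.Icc 0 (ty - 1)) ∪
      (Finset.Icc 0 (tx - 1) ×ˢ Finset.Icc 0 (ty - 1)).image
        (fun ij => (ij.1 * tx, ij.2 * ty))) :
    A.card = 2 * tx * ty - 1 ∧
    ∀ x ≤ tx ^ 2 - 1, ∀ y ≤ ty ^ 2 - 1, (x, y) ∈ A + A := by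
  set B := Finset.Icc 0 (tx - 1) ×ˢ Finset.Icc 0 (ty - 1) with hB
  set C := B.image (fun ij : ℕ × ℕ => (ij.1 * tx, ij.2 * ty)) with hC
  have hBcard : B.card = tx * ty := by
    simp [hB, Nat.card_Icc]
    cases tx with
    | zero => omega
    | succ n => cases ty with
      | zero => omega
      | succ m => simp
  have hCcard : C.card = tx * ty := by
    rw [hC, Finset.card_image_of_injOn, hBcard]
    rintro ⟨i, j⟩ _ ⟨i', j'⟩ _ h
    simp only [Prod.mk.injEq] at h
    have h1 : i = i' := Nat.eq_of_mul_eq_mul_right htx h.1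
    have h2 : j = j' := Nat.eq_of_mul_eq_mul_right hty h.2
    simp [h1, h2]
  have hint : B ∩ C = {(0, 0)} := by
    ext ⟨x, y⟩
    simp only [Finset.mem_inter, hC, Finset.mem_image, hB, Finset.mem_product,
      Finset.mem_Icc, Finset.mem_singleton, Prod.mk.injEq, Prod.ext_iff]
    constructor
    · rintro ⟨⟨⟨-, hx⟩, -, hy⟩, ⟨i, j⟩, ⟨⟨-, -⟩, -, -⟩, hxe, hye⟩
      simp only at hxe hye
      have hi : i * tx < 1 * tx := by omega
      have hj : j * ty < 1 * ty := by omega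
      have hi0 : i = 0 := Nat.lt_one_iff.mp (Nat.lt_of_mul_lt_mul_right hi)
      have hj0 : j = 0 := Nat.lt_one_iff.mp (Nat.lt_of_mul_lt_mul_right hj)
      subst hi0; subst hj0
      simp only [Nat.zero_mul] at hxe hye
      omega
    · rintro ⟨rfl, rfl⟩
      exact ⟨⟨⟨Nat.zero_le _, Nat.zero_le _⟩, Nat.zero_le _, Nat.zero_le _⟩,
        ⟨0, 0⟩, ⟨⟨Nat.zero_le _, Nat.zero_le _⟩, Nat.zero_le _, Nat.zero_le _⟩, by simp, by simp⟩
  constructor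
  · have hcu := Finset.card_union_add_card_inter B C
    rw [hint, hBcard, hCcard] at hcu
    simp only [Finset.card_singleton] at hcu
    have h2 : 2 * tx * ty = tx * ty + tx * ty := by ring
    rw [hA]
    omega
  · intro x hx y hy
    have e1 : tx ^ 2 = tx * tx := sq tx
    have e2 : ty ^ 2 = ty * ty := sq ty
    rw [e1] at hx
    rw [e2] at hy
    have p1 : 1 ≤ tx * tx := Nat.mul_le_mul htx htx
    have p2 : 1 ≤ ty * ty := Nat.mul_le_mul hty hty
    have hx' : x < tx * tx := by omega
    have hy' : y < ty * ty := by omega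
    have hq : x / tx < tx := (Nat.div_lt_iff_lt_mul htx).mpr hx'
    have hp : y / ty < ty := (Nat.div_lt_iff_lt_mul hty).mpr hy'
    have hr : x % tx < tx := Nat.mod_lt _ htx
    have hs : y % ty < ty := Nat.mod_lt _ hty
    have hmem1 : (x % tx, y % ty) ∈ A := by
      rw [hA]
      apply Finset.mem_union_left
      rw [hB]
      simp only [Finset.mem_product, Finset.mem_Icc]
      omega
    have hmem2 : ((x / tx) * tx, (y / ty) * ty) ∈ A := by
      rw [hA]
      apply Finset.mem_union_right
      rw [hC]
      simp only [Finset.mem_image]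
      refine ⟨(x / tx, y / ty), ?_, rfl⟩
      rw [hB]
      simp only [Finset.mem_product, Finset.mem_Icc]
      exact ⟨⟨Nat.zero_le _, Nat.le_sub_one_of_lt hq⟩, Nat.zero_le _, Nat.le_sub_one_of_lt hp⟩
    have hsum := Finset.add_mem_add hmem1 hmem2
    have heq : (x % tx, y % ty) + ((x / tx) * tx, (y / ty) * ty) = (x, y) := by
      simp only [Prod.mk_add_mk, Prod.mk.injEq]
      exact ⟨Nat.mod_add_div' x tx, Nat.mod_add_div' y ty⟩
    rwa [heq] at hsum
end

section
/- Let t_x, t_y ≥ 1 be integers and let A = B ∪ C be the short-bars basis with parameters t_x, t_y, where B = [0,t_x−1] × {j·t_y : 0 ≤ j ≤ t_y−1} and C = {i·t_x : 0 ≤ i ≤ t_x−1} × [0,t_y−1]. Then |A| = 2·t_x·t_y − 1 and A + A ⊇ [0, t_x²−1] × [0, t_y²−1]. -/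
open Pointwise

/-- Short-bars basis: with parameters `t_x, t_y ≥ 1`, the set
`A = B ∪ C` with `B = [0,t_x−1] × {j·t_y : 0 ≤ j ≤ t_y−1}` and
`C = {i·t_x : 0 ≤ i ≤ t_x−1} × [0,t_y−1]` has
`|A| = 2·t_x·t_y − 1` and `A + A ⊇ [0,t_x²−1] × [0,t_y²−1]`. -/
theorem short_bars_basis (tx ty : ℕ) (htx : 1 ≤ tx) (hty : 1 ≤ ty)
    (A : Finset (ℕ × ℕ))
    (hA : A = (Finset.Icc 0 (tx - 1) ×ˢ (Finset.Icc 0 (ty - 1)).image (· * ty)) ∪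
      ((Finset.Icc 0 (tx - 1)).image (· * tx) ×ˢ Finset.Icc 0 (ty - 1))) :
    A.card = 2 * tx * ty - 1 ∧
    ∀ x ≤ tx ^ 2 - 1, ∀ y ≤ ty ^ 2 - 1, (x, y) ∈ A + A := by
  set B := (Finset.Icc 0 (tx - 1) ×ˢ (Finset.Icc 0 (ty - 1)).image (· * ty)) with hB
  set C := ((Finset.Icc 0 (tx - 1)).image (· * tx) ×ˢ Finset.Icc 0 (ty - 1)) with hC
  have hinter : B ∩ C = {(0, 0)} := by
    ext ⟨a, b⟩
    simp only [hB, hC, Finset.mem_inter, Finset.mem_product, Finset.mem_image,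
      Finset.mem_Icc, Finset.mem_singleton, Prod.mk.injEq]
    constructor
    · rintro ⟨⟨⟨-, ha⟩, j, ⟨-, hj⟩, rfl⟩, ⟨i, ⟨-, hi⟩, rfl⟩, -, hb⟩
      constructor
      · rcases Nat.eq_zero_or_pos i with rfl | hi0
        · simp
        · have := Nat.le_mul_of_pos_left tx hi0; omega
      · rcases Nat.eq_zero_or_pos j with rfl | hj0
        · simp
        · have := Nat.le_mul_of_pos_left ty hj0; omega
    · rintro ⟨rfl, rfl⟩
      refine ⟨⟨⟨le_rfl, Nat.zero_le _⟩, 0, ⟨⟨le_rfl, Nat.zero_le _⟩, by simp⟩⟩,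
        ⟨0, ⟨⟨le_rfl, Nat.zero_le _⟩, by simp⟩⟩, le_rfl, Nat.zero_le _⟩
  have hcardB : B.card = tx * ty := by
    rw [hB, Finset.card_product, Finset.card_image_of_injective _
      (fun a b h => Nat.eq_of_mul_eq_mul_right hty h)]
    simp [Nat.card_Icc, Nat.sub_add_cancel htx, Nat.sub_add_cancel hty]
  have hcardC : C.card = tx * ty := by
    rw [hC, Finset.card_product, Finset.card_image_of_injective _
      (fun a b h => Nat.eq_of_mul_eq_mul_right htx h)]
    simp [Nat.card_Icc, Nat.sub_add_cancel htx, Nat.sub_add_cancel hty]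
  constructor
  · have := Finset.card_union_add_card_inter B C
    rw [hinter] at this
    simp only [Finset.card_singleton] at this
    rw [hcardB, hcardC] at this
    have h2 : 2 * tx * ty = tx * ty + tx * ty := by ring
    rw [hA]
    omega
  · intro x hx y hy
    have hx' : x < tx ^ 2 := by nlinarith [Nat.sub_add_cancel (Nat.one_le_pow 2 tx htx)]
    have hy' : y < ty ^ 2 := by nlinarith [Nat.sub_add_cancel (Nat.one_le_pow 2 ty hty)]
    have hqx : x / tx ≤ tx - 1 := by
      have : x / tx < tx := Nat.div_lt_of_lt_mul (by rw [← sq]; exact hx')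
      omega
    have hqy : y / ty ≤ ty - 1 := by
      have : y / ty < ty := Nat.div_lt_of_lt_mul (by rw [← sq]; exact hy')
      omega
    have hrx : x % tx ≤ tx - 1 := by
      have := Nat.mod_lt x (show 0 < tx from htx); omega
    have hry : y % ty ≤ ty - 1 := by
      have := Nat.mod_lt y (show 0 < ty from hty); omega
    have h1 : (x % tx, y / ty * ty) ∈ A := by
      rw [hA]
      refine Finset.mem_union_left _ ?_
      simp only [hB, hC, Finset.mem_product, Finset.mem_image, Finset.mem_Icc]
      exact ⟨⟨Nat.zero_le _, hrx⟩, y / ty, ⟨Nat.zero_le _, hqy⟩, rfl⟩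
    have h2 : (x / tx * tx, y % ty) ∈ A := by
      rw [hA]
      refine Finset.mem_union_right _ ?_
      simp only [hB, hC, Finset.mem_product, Finset.mem_image, Finset.mem_Icc]
      exact ⟨⟨x / tx, ⟨Nat.zero_le _, hqx⟩, rfl⟩, Nat.zero_le _, hry⟩
    have : (x, y) = (x % tx, y / ty * ty) + (x / tx * tx, y % ty) := by
      simp only [Prod.mk_add_mk, Prod.mk.injEq]
      constructor
      · rw [Nat.mod_add_div']
      · rw [add_comm, Nat.mod_add_div']
    rw [this]
    exact Finset.add_mem_add h1 h2
end

section
/- Let p, q, h ≥ 1 be integers and set t_x = q·h and t_y = p·h. The dense-sparse basis A with parameters t_x, t_y is a basis for the rectangle [0, t_x²−1] × [0, t_y²−1], whose aspect ratio is p²/q², and its efficiency satisfies c = t_x²·t_y² / (2·t_x·t_y − 1)² > 1/4; moreover, for fixed p and q, c tends to 1/4 as h → ∞. -/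
/-!
Writing `x = ⌊x/t_x⌋·t_x + (x mod t_x)` (and likewise for `y`) splits every point of the
rectangle as a point of the sparse grid plus a point of the dense block. The two pieces have
`t_x·t_y` points each and share only the origin, so `|A| = 2t_xt_y − 1`. With `n = t_xt_y = pqh²`
the efficiency is `n²/(2n − 1)²`, which exceeds `1/4` since `4n > 1` and tends to `1/4` as
`n → ∞`.
-/

open Pointwise Filter Topology

namespace DenseSparse

variable {tx ty : ℕ}

def denseBlock (tx ty : ℕ) : Finset (ℕ × ℕ) :=
  Finset.Icc 0 (tx - 1) ×ˢ Finset.Icc 0 (ty - 1)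

def sparseGrid (tx ty : ℕ) : Finset (ℕ × ℕ) :=
  (denseBlock tx ty).image fun ij => (ij.1 * tx, ij.2 * ty)

lemma mem_denseBlock (htx : 0 < tx) (hty : 0 < ty) {a b : ℕ} :
    (a, b) ∈ denseBlock tx ty ↔ a < tx ∧ b < ty := by
  simp only [denseBlock, Finset.mem_product, Finset.mem_Icc, zero_le, true_and]
  omega

lemma card_denseBlock (htx : 0 < tx) (hty : 0 < ty) : (denseBlock tx ty).card = tx * ty := by
  simp only [denseBlock, Finset.card_product, Nat.card_Icc]
  congr 1 <;> omega

lemma card_sparseGrid (htx : 0 < tx) (hty : 0 < ty) : (sparseGrid tx ty).card = tx * ty := by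
  rw [sparseGrid, Finset.card_image_of_injective _, card_denseBlock htx hty]
  rintro ⟨i, j⟩ ⟨i', j'⟩ h
  simp only [Prod.mk.injEq] at h ⊢
  exact ⟨Nat.eq_of_mul_eq_mul_right htx h.1, Nat.eq_of_mul_eq_mul_right hty h.2⟩

lemma denseBlock_inter_sparseGrid (htx : 0 < tx) (hty : 0 < ty) :
    denseBlock tx ty ∩ sparseGrid tx ty = {(0, 0)} := by
  ext ⟨a, b⟩
  simp only [sparseGrid, Finset.mem_inter, Finset.mem_image, Finset.mem_singleton,
    Prod.exists, Prod.mk.injEq, mem_denseBlock htx hty]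
  constructor
  · rintro ⟨⟨ha, hb⟩, i, j, -, rfl, rfl⟩
    have hi : i = 0 := by
      by_contra hi
      exact absurd ha (not_lt.2 (Nat.le_mul_of_pos_left tx (Nat.pos_of_ne_zero hi)))
    have hj : j = 0 := by
      by_contra hj
      exact absurd hb (not_lt.2 (Nat.le_mul_of_pos_left ty (Nat.pos_of_ne_zero hj)))
    simp [hi, hj]
  · rintro ⟨rfl, rfl⟩
    exact ⟨⟨htx, hty⟩, 0, 0, ⟨htx, hty⟩, by simp, by simp⟩

lemma card_denseBlock_union_sparseGrid (htx : 0 < tx) (hty : 0 < ty) :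
    (denseBlock tx ty ∪ sparseGrid tx ty).card = 2 * tx * ty - 1 := by
  have h := Finset.card_union_add_card_inter (denseBlock tx ty) (sparseGrid tx ty)
  rw [denseBlock_inter_sparseGrid htx hty, card_denseBlock htx hty, card_sparseGrid htx hty,
    Finset.card_singleton] at h
  have := Nat.mul_pos htx hty
  rw [mul_assoc, two_mul]
  omega

lemma mem_sparseGrid_add_denseBlock (htx : 0 < tx) (hty : 0 < ty) {x y : ℕ}
    (hx : x < tx ^ 2) (hy : y < ty ^ 2) : (x, y) ∈ sparseGrid tx ty + denseBlock tx ty := by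
  have hquot : (x / tx, y / ty) ∈ denseBlock tx ty :=
    (mem_denseBlock htx hty).2
      ⟨Nat.div_lt_of_lt_mul (by rwa [← sq]), Nat.div_lt_of_lt_mul (by rwa [← sq])⟩
  have hrem : (x % tx, y % ty) ∈ denseBlock tx ty :=
    (mem_denseBlock htx hty).2 ⟨Nat.mod_lt x htx, Nat.mod_lt y hty⟩
  have hgrid : (x / tx * tx, y / ty * ty) ∈ sparseGrid tx ty :=
    Finset.mem_image_of_mem (fun ij : ℕ × ℕ => (ij.1 * tx, ij.2 * ty)) hquot
  have h := Finset.add_mem_add hgrid hrem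
  rwa [Prod.mk_add_mk, Nat.div_add_mod', Nat.div_add_mod'] at h

lemma mem_add_self_of_lt (htx : 0 < tx) (hty : 0 < ty) {x y : ℕ}
    (hx : x < tx ^ 2) (hy : y < ty ^ 2) :
    (x, y) ∈ (denseBlock tx ty ∪ sparseGrid tx ty) + (denseBlock tx ty ∪ sparseGrid tx ty) :=
  Finset.add_subset_add Finset.subset_union_right Finset.subset_union_left
    (mem_sparseGrid_add_denseBlock htx hty hx hy)

end DenseSparse

lemma one_quarter_lt_sq_div_sq_two_mul_sub_one {n : ℝ} (hn : 1 / 2 < n) :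
    1 / 4 < n ^ 2 / (2 * n - 1) ^ 2 := by
  rw [div_lt_div_iff₀ (by norm_num) (by nlinarith)]
  nlinarith

lemma tendsto_sq_div_sq_two_mul_sub_one :
    Tendsto (fun n : ℝ => n ^ 2 / (2 * n - 1) ^ 2) atTop (𝓝 (1 / 4)) := by
  have hlim : Tendsto (fun n : ℝ => (2 - n⁻¹)⁻¹ ^ 2) atTop (𝓝 ((2 - 0)⁻¹ ^ 2)) :=
    ((tendsto_const_nhds.sub tendsto_inv_atTop_zero).inv₀ (by norm_num)).pow 2
  norm_num at hlim ⊢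
  refine hlim.congr' ?_
  filter_upwards [eventually_gt_atTop 1] with n hn
  have : 2 * n - 1 ≠ 0 := by linarith
  field_simp

open DenseSparse in
/-- Corollary: for a fixed aspect ratio `ρ = p²/q²` and `t_x = q·h`,
`t_y = p·h`, the dense-sparse basis is a basis for
`[0,t_x²−1] × [0,t_y²−1]` (a rectangle of aspect ratio `p²/q²`), its
efficiency is `t_x²t_y²/(2t_xt_y−1)² > 1/4`, and the efficiency tends to
`1/4` as `h → ∞`. -/
theorem dense_sparse_efficiency (p q : ℕ) (hp : 1 ≤ p) (hq : 1 ≤ q) :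
    (∀ h : ℕ, 1 ≤ h → ∀ tx ty : ℕ, tx = q * h → ty = p * h →
      ∀ A : Finset (ℕ × ℕ),
        A = (Finset.Icc 0 (tx - 1) ×ˢ Finset.Icc 0 (ty - 1)) ∪
          (Finset.Icc 0 (tx - 1) ×ˢ Finset.Icc 0 (ty - 1)).image
            (fun ij => (ij.1 * tx, ij.2 * ty)) →
        (∀ x ≤ tx ^ 2 - 1, ∀ y ≤ ty ^ 2 - 1, (x, y) ∈ A + A) ∧
        ((ty ^ 2 : ℝ) / (tx ^ 2 : ℝ) = (p ^ 2 : ℝ) / (q ^ 2 : ℝ)) ∧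
        ((tx ^ 2 * ty ^ 2 : ℝ) / (A.card : ℝ) ^ 2 =
          (tx ^ 2 * ty ^ 2 : ℝ) / ((2 * tx * ty : ℝ) - 1) ^ 2) ∧
        (1 / 4 < (tx ^ 2 * ty ^ 2 : ℝ) / ((2 * tx * ty : ℝ) - 1) ^ 2)) ∧
    Tendsto (fun h : ℕ =>
        (((q * h) ^ 2 * (p * h) ^ 2 : ℕ) : ℝ) /
          ((2 * (q * h) * (p * h) : ℝ) - 1) ^ 2)
      atTop (nhds (1 / 4)) := by
  refine ⟨fun h hh tx ty htx hty A hA => ?_, ?_⟩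
  · change A = denseBlock tx ty ∪ sparseGrid tx ty at hA
    have htx0 : 0 < tx := htx ▸ by positivity
    have hty0 : 0 < ty := hty ▸ by positivity
    have hn : (1 : ℝ) ≤ tx * ty := by exact_mod_cast Nat.mul_pos htx0 hty0
    refine ⟨fun x hx y hy => hA ▸ mem_add_self_of_lt htx0 hty0
      (by have := pow_pos htx0 2; omega) (by have := pow_pos hty0 2; omega), ?_, ?_, ?_⟩
    · subst htx hty
      have : (h : ℝ) ≠ 0 := by positivity
      push_cast
      field_simp
    · rw [hA, card_denseBlock_union_sparseGrid htx0 hty0, Nat.cast_sub (by nlinarith)]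
      push_cast
      rfl
    · simpa only [mul_pow, mul_assoc] using
        one_quarter_lt_sq_div_sq_two_mul_sub_one (n := tx * ty) (by linarith)
  · have hpq : (0 : ℝ) < p * q := by positivity
    have hgrow : Tendsto (fun h : ℕ => (p * q : ℝ) * (h : ℝ) ^ 2) atTop atTop :=
      ((tendsto_pow_atTop two_ne_zero).comp tendsto_natCast_atTop_atTop).const_mul_atTop hpq
    refine (tendsto_sq_div_sq_two_mul_sub_one.comp hgrow).congr fun h => ?_
    simp only [Function.comp]
    push_cast
    ring
end

section
/- Let s_y ≥ 0 and t ≥ 1 be integers, set a = 4·s_y + 3, Y = [0,s_y], and let A = I₁ ∪ I₂ ∪ I₃ ∪ T ∪ S be the stacked Mrose basis, where I₁ = [0,t] × Y, T = {i·t : 0 ≤ i ≤ a·t − 1} × {0}, S = {a·t² + j·(t+1) : 0 ≤ j ≤ t−1} × Y (the (t+1)-step progression from a·t² to (a+1)·t² − 1), I₂ = [2a·t², 2a·t² + t] × Y, and I₃ = [(3a+1)·t², (3a+1)·t² + t] × Y. Then |A| = (8·s_y + 7)·t + (3·s_y + 1) and A + A ⊇ [0, (16·s_y + 14)·t² − 1]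 × [0, s_y]. -/
open Pointwise

/-- Stacked Mrose basis: with parameters `s_y ≥ 0`, `t ≥ 1` and
`a = 4s_y + 3`, the set `A = I₁ ∪ I₂ ∪ I₃ ∪ T ∪ S` has
`|A| = (8s_y+7)t + (3s_y+1)` and
`A + A ⊇ [0,(16s_y+14)t² − 1] × [0,s_y]`. -/
theorem stacked_mrose_basis (sy t : ℕ) (ht : 1 ≤ t)
    (a : ℕ) (ha : a = 4 * sy + 3)
    (Y : Finset ℕ) (hY : Y = Finset.Icc 0 sy)
    (I₁ T S I₂ I₃ A : Finset (ℕ × ℕ))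
    (hI₁ : I₁ = Finset.Icc 0 t ×ˢ Y)
    (hT : T = (Finset.Icc 0 (a * t - 1)).image (fun i => i * t) ×ˢ {0})
    (hS : S = (Finset.Icc 0 (t - 1)).image (fun j => a * t ^ 2 + j * (t + 1)) ×ˢ Y)
    (hI₂ : I₂ = Finset.Icc (2 * a * t ^ 2) (2 * a * t ^ 2 + t) ×ˢ Y)
    (hI₃ : I₃ = Finset.Icc ((3 * a + 1) * t ^ 2) ((3 * a + 1) * t ^ 2 + t) ×ˢ Y)
    (hA : A = I₁ ∪ I₂ ∪ I₃ ∪ T ∪ S) :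
    A.card = (8 * sy + 7) * t + (3 * sy + 1) ∧
    ∀ x ≤ (16 * sy + 14) * t ^ 2 - 1, ∀ y ≤ sy, (x, y) ∈ A + A := by
  have ht0 : 0 < t := ht
  have ha3 : 3 ≤ a := by omega
  -- bridging arithmetic facts (to linearize omega goals)
  have f1 : t * t = t ^ 2 := by ring
  have f2 : 2 * a * t ^ 2 = 2 * (a * t ^ 2) := by ring
  have f3 : (3 * a + 1) * t ^ 2 = 3 * (a * t ^ 2) + t ^ 2 := by ring
  have f5 : 3 * t ^ 2 ≤ a * t ^ 2 := Nat.mul_le_mul_right (t ^ 2) ha3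
  have f6 : t ≤ t ^ 2 := by nlinarith
  have f7 : a * t * t = a * t ^ 2 := by ring
  have f9 : (16 * sy + 14) * t ^ 2 = 4 * (a * t ^ 2) + 2 * t ^ 2 := by rw [ha]; ring
  have f10 : (a * t - 1) * t = a * t * t - t := by rw [Nat.sub_mul, one_mul]
  have f11 : 3 * t ≤ a * t := Nat.mul_le_mul_right t ha3
  have f12 : t * (t + 1) = t ^ 2 + t := by ring
  have f15 : (t - 1) * t = t * t - t := by rw [Nat.sub_mul, one_mul]
  -- coordinate bounds
  have bI₁x : ∀ x y : ℕ, (x, y) ∈ I₁ → x ≤ t := by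
    intro x y hp; rw [hI₁] at hp
    exact (Finset.mem_Icc.1 (Finset.mem_product.1 hp).1).2
  have bI₂x : ∀ x y : ℕ, (x, y) ∈ I₂ → 2 * a * t ^ 2 ≤ x ∧ x ≤ 2 * a * t ^ 2 + t := by
    intro x y hp; rw [hI₂] at hp
    exact Finset.mem_Icc.1 (Finset.mem_product.1 hp).1
  have bI₃x : ∀ x y : ℕ, (x, y) ∈ I₃ → (3 * a + 1) * t ^ 2 ≤ x := by
    intro x y hp; rw [hI₃] at hp
    exact (Finset.mem_Icc.1 (Finset.mem_product.1 hp).1).1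
  have bTmem : ∀ x y : ℕ, (x, y) ∈ T → y = 0 ∧ ∃ i, i ≤ a * t - 1 ∧ i * t = x := by
    intro x y hp; rw [hT] at hp
    obtain ⟨h1, h2⟩ := Finset.mem_product.1 hp
    simp only [Finset.mem_singleton] at h2
    obtain ⟨i, hi, hx⟩ := Finset.mem_image.1 h1
    exact ⟨h2, i, (Finset.mem_Icc.1 hi).2, hx⟩
  have bTx : ∀ x y : ℕ, (x, y) ∈ T → x + t ≤ a * t ^ 2 := by
    intro x y hp
    obtain ⟨-, i, hi, hx⟩ := bTmem x y hp
    have h2 := Nat.mul_le_mul_right t hi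
    omega
  have bSx : ∀ x y : ℕ, (x, y) ∈ S → a * t ^ 2 ≤ x ∧ x + 1 ≤ a * t ^ 2 + t ^ 2 := by
    intro x y hp; rw [hS] at hp
    obtain ⟨h1, -⟩ := Finset.mem_product.1 hp
    obtain ⟨j, hj, hx⟩ := Finset.mem_image.1 h1
    have hj' : j ≤ t - 1 := (Finset.mem_Icc.1 hj).2
    have h2 := Nat.mul_le_mul_right (t + 1) hj'
    have h3 := Nat.sub_mul t 1 (t + 1)
    simp only at hx
    omega
  -- disjointness
  have d12 : Disjoint I₁ I₂ := by
    rw [Finset.disjoint_left]; rintro ⟨x, y⟩ h1 h2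
    have := bI₁x x y h1; have := bI₂x x y h2; omega
  have dB3 : Disjoint (I₁ ∪ I₂) I₃ := by
    rw [Finset.disjoint_left]; rintro ⟨x, y⟩ h1 h2
    have h3 := bI₃x x y h2
    rcases Finset.mem_union.1 h1 with h | h
    · have := bI₁x x y h; omega
    · have := bI₂x x y h; omega
  have dAS : Disjoint (I₁ ∪ I₂ ∪ I₃ ∪ T) S := by
    rw [Finset.disjoint_left]; rintro ⟨x, y⟩ h1 h2
    have hs := bSx x y h2
    rcases Finset.mem_union.1 h1 with h | h
    · rcases Finset.mem_union.1 h with h | h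
      · rcases Finset.mem_union.1 h with h | h
        · have := bI₁x x y h; omega
        · have := bI₂x x y h; omega
      · have := bI₃x x y h; omega
    · have := bTx x y h; omega
  -- intersection with T
  have hint : (I₁ ∪ I₂ ∪ I₃) ∩ T = ({((0 : ℕ), (0 : ℕ)), ((t : ℕ), (0 : ℕ))} : Finset (ℕ × ℕ)) := by
    ext ⟨x, y⟩
    simp only [Finset.mem_inter, Finset.mem_union, Finset.mem_insert, Finset.mem_singleton,
      Prod.mk.injEq]
    constructor
    · rintro ⟨hB, hTm⟩
      obtain ⟨hy0, i, hi, hx⟩ := bTmem x y hTm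
      rcases hB with (h | h) | h
      · have hxt := bI₁x x y h
        have h2 : i = 0 ∨ i = 1 := by
          by_contra hc
          push_neg at hc
          have : 2 ≤ i := by omega
          have := Nat.mul_le_mul_right t this
          omega
        rcases h2 with rfl | rfl
        · left; constructor <;> omega
        · right; constructor <;> omega
      · exfalso
        have := bI₂x x y h
        have h2 := Nat.mul_le_mul_right t hi
        omega
      · exfalso
        have := bI₃x x y h
        have h2 := Nat.mul_le_mul_right t hi
        omega
    · rintro (⟨hx1, hy1⟩ | ⟨hx1, hy1⟩)
      · refine ⟨Or.inl (Or.inl ?_), ?_⟩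
        · rw [hI₁, hY, hx1, hy1]
          exact Finset.mem_product.2 ⟨Finset.mem_Icc.2 ⟨Nat.zero_le _, Nat.zero_le _⟩,
            Finset.mem_Icc.2 ⟨Nat.zero_le _, Nat.zero_le _⟩⟩
        · rw [hT, hx1, hy1]
          refine Finset.mem_product.2 ⟨?_, Finset.mem_singleton_self 0⟩
          exact Finset.mem_image.2 ⟨0, Finset.mem_Icc.2 ⟨Nat.zero_le _, Nat.zero_le _⟩,
            by simp⟩
      · refine ⟨Or.inl (Or.inl ?_), ?_⟩
        · rw [hI₁, hY, hx1, hy1]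
          exact Finset.mem_product.2 ⟨Finset.mem_Icc.2 ⟨Nat.zero_le _, le_refl _⟩,
            Finset.mem_Icc.2 ⟨Nat.zero_le _, Nat.zero_le _⟩⟩
        · rw [hT, hx1, hy1]
          refine Finset.mem_product.2 ⟨?_, Finset.mem_singleton_self 0⟩
          exact Finset.mem_image.2 ⟨1, Finset.mem_Icc.2 ⟨Nat.zero_le _, by omega⟩, by simp⟩
  -- cardinalities of the pieces
  have hI1c : I₁.card = (t + 1) * (sy + 1) := by
    rw [hI₁, hY, Finset.card_product, Nat.card_Icc, Nat.card_Icc]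
    congr 1 <;> omega
  have hTc : T.card = a * t := by
    rw [hT, Finset.card_product, Finset.card_singleton, mul_one,
      Finset.card_image_of_injective _ (mul_left_injective₀ (by omega : t ≠ 0)),
      Nat.card_Icc]
    omega
  have hSc : S.card = t * (sy + 1) := by
    have hinj : Function.Injective (fun j => a * t ^ 2 + j * (t + 1)) := by
      intro i j h
      simp only at h
      exact mul_left_injective₀ (by omega : t + 1 ≠ 0) (by omega : i * (t + 1) = j * (t + 1))
    rw [hS, hY, Finset.card_product, Finset.card_image_of_injective _ hinj,
      Nat.card_Icc, Nat.card_Icc]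
    congr 1 <;> omega
  have hI2c : I₂.card = (t + 1) * (sy + 1) := by
    rw [hI₂, hY, Finset.card_product, Nat.card_Icc, Nat.card_Icc]
    congr 1 <;> omega
  have hI3c : I₃.card = (t + 1) * (sy + 1) := by
    rw [hI₃, hY, Finset.card_product, Nat.card_Icc, Nat.card_Icc]
    congr 1 <;> omega
  -- assemble cardinality
  have cB : (I₁ ∪ I₂ ∪ I₃).card = 3 * ((t + 1) * (sy + 1)) := by
    rw [Finset.card_union_of_disjoint dB3, Finset.card_union_of_disjoint d12,
      hI1c, hI2c, hI3c]
    ring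
  have hpairc : ({((0 : ℕ), (0 : ℕ)), ((t : ℕ), (0 : ℕ))} : Finset (ℕ × ℕ)).card = 2 := by
    rw [Finset.card_insert_of_notMem (by simp [Prod.ext_iff]; omega), Finset.card_singleton]
  have cBT : (I₁ ∪ I₂ ∪ I₃ ∪ T).card = 3 * ((t + 1) * (sy + 1)) + a * t - 2 := by
    have h2 := Finset.card_union_add_card_inter (I₁ ∪ I₂ ∪ I₃) T
    rw [hint, cB, hTc, hpairc] at h2
    omega
  have hcard : A.card = (8 * sy + 7) * t + (3 * sy + 1) := by
    rw [hA, Finset.card_union_of_disjoint dAS, cBT, hSc]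
    have g1 : (t + 1) * (sy + 1) = t * sy + t + sy + 1 := by ring
    have g2 : t * (sy + 1) = t * sy + t := by ring
    have g3 : a * t = 4 * (t * sy) + 3 * t := by rw [ha]; ring
    have g4 : (8 * sy + 7) * t = 8 * (t * sy) + 7 * t := by ring
    omega
  refine ⟨hcard, ?_⟩
  -- membership helpers
  have hmemI₁ : ∀ r y : ℕ, r ≤ t → y ≤ sy → ((r : ℕ), y) ∈ A := by
    intro r y hr hy
    rw [hA]
    refine Finset.mem_union_left _ (Finset.mem_union_left _ (Finset.mem_union_left _
      (Finset.mem_union_left _ ?_)))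
    rw [hI₁, hY]
    exact Finset.mem_product.2 ⟨Finset.mem_Icc.2 ⟨Nat.zero_le _, hr⟩,
      Finset.mem_Icc.2 ⟨Nat.zero_le _, hy⟩⟩
  have hmemT : ∀ i : ℕ, i ≤ a * t - 1 → ((i * t : ℕ), (0 : ℕ)) ∈ A := by
    intro i hi
    rw [hA]
    refine Finset.mem_union_left _ (Finset.mem_union_right _ ?_)
    rw [hT]
    refine Finset.mem_product.2 ⟨?_, Finset.mem_singleton_self 0⟩
    exact Finset.mem_image.2 ⟨i, Finset.mem_Icc.2 ⟨Nat.zero_le _, hi⟩, rfl⟩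
  have hmemS : ∀ j y : ℕ, j ≤ t - 1 → y ≤ sy → ((a * t ^ 2 + j * (t + 1) : ℕ), y) ∈ A := by
    intro j y hj hy
    rw [hA]
    refine Finset.mem_union_right _ ?_
    rw [hS, hY]
    exact Finset.mem_product.2 ⟨Finset.mem_image.2 ⟨j, Finset.mem_Icc.2 ⟨Nat.zero_le _, hj⟩, rfl⟩,
      Finset.mem_Icc.2 ⟨Nat.zero_le _, hy⟩⟩
  have hmemI₂ : ∀ r y : ℕ, r ≤ t → y ≤ sy → ((2 * a * t ^ 2 + r : ℕ), y) ∈ A := by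
    intro r y hr hy
    rw [hA]
    refine Finset.mem_union_left _ (Finset.mem_union_left _ (Finset.mem_union_left _
      (Finset.mem_union_right _ ?_)))
    rw [hI₂, hY]
    exact Finset.mem_product.2 ⟨Finset.mem_Icc.2 ⟨by omega, by omega⟩,
      Finset.mem_Icc.2 ⟨Nat.zero_le _, hy⟩⟩
  have hmemI₃ : ∀ r y : ℕ, r ≤ t → y ≤ sy → (((3 * a + 1) * t ^ 2 + r : ℕ), y) ∈ A := by
    intro r y hr hy
    rw [hA]
    refine Finset.mem_union_left _ (Finset.mem_union_left _ (Finset.mem_union_right _ ?_))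
    rw [hI₃, hY]
    exact Finset.mem_product.2 ⟨Finset.mem_Icc.2 ⟨by omega, by omega⟩,
      Finset.mem_Icc.2 ⟨Nat.zero_le _, hy⟩⟩
  have base0 : ∀ r y : ℕ, r ≤ t → y ≤ sy → ((0 + r : ℕ), y) ∈ A := by
    intro r y hr hy
    rw [Nat.zero_add]
    exact hmemI₁ r y hr hy
  -- generic coverage via base + T
  have keyT : ∀ b : ℕ, (∀ r y : ℕ, r ≤ t → y ≤ sy → ((b + r : ℕ), y) ∈ A) →
      ∀ x y : ℕ, b ≤ x → x < b + a * t ^ 2 → y ≤ sy → (x, y) ∈ A + A := by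
    intro b hb x y h1 h2 hy
    set z := x - b with hzdef
    have hz : z < a * t ^ 2 := by omega
    have hq : z / t < a * t := by
      rw [Nat.div_lt_iff_lt_mul ht0]; omega
    have hr : z % t < t := Nat.mod_lt _ ht0
    have hdm : z / t * t + z % t = z := Nat.div_add_mod' z t
    have ex : x = b + z % t + z / t * t := by omega
    have e : (x, y) = ((b + z % t : ℕ), y) + ((z / t * t : ℕ), (0 : ℕ)) := by
      rw [Prod.mk_add_mk, ← ex]; simp
    rw [e]
    exact Finset.add_mem_add (hb _ y (le_of_lt hr) hy) (hmemT _ (by omega))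
  -- generic coverage via base + S
  have keyS : ∀ b : ℕ, (∀ r y : ℕ, r ≤ t → y ≤ sy → ((b + r : ℕ), y) ∈ A) →
      ∀ x y : ℕ, b + a * t ^ 2 ≤ x → x < b + a * t ^ 2 + t ^ 2 + t → y ≤ sy → (x, y) ∈ A + A := by
    intro b hb x y h1 h2 hy
    set z := x - (b + a * t ^ 2) with hzdef
    have hz : z < t ^ 2 + t := by omega
    have hj : z / (t + 1) < t := by
      rw [Nat.div_lt_iff_lt_mul (by omega : 0 < t + 1)]; omega
    have hr : z % (t + 1) < t + 1 := Nat.mod_lt _ (by omega)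
    have hdm : z / (t + 1) * (t + 1) + z % (t + 1) = z := Nat.div_add_mod' z (t + 1)
    have ex : x = b + z % (t + 1) + (a * t ^ 2 + z / (t + 1) * (t + 1)) := by omega
    have e : (x, y) = ((b + z % (t + 1) : ℕ), y) +
        ((a * t ^ 2 + z / (t + 1) * (t + 1) : ℕ), (0 : ℕ)) := by
      rw [Prod.mk_add_mk, ← ex]; simp
    rw [e]
    exact Finset.add_mem_add (hb _ y (by omega) hy) (hmemS _ 0 (by omega) (Nat.zero_le _))
  -- coverage via S + T in the middle range
  have key3 : ∀ x y : ℕ, a * t ^ 2 + t ^ 2 ≤ x → x < 2 * a * t ^ 2 → y ≤ sy →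
      (x, y) ∈ A + A := by
    intro x y h1 h2 hy
    set z := x - a * t ^ 2 with hzdef
    have hz1 : t ^ 2 ≤ z := by omega
    have hz2 : z < a * t ^ 2 := by omega
    have hm1 : t ≤ z / t := by
      rw [Nat.le_div_iff_mul_le ht0]; omega
    have hm2 : z / t < a * t := by
      rw [Nat.div_lt_iff_lt_mul ht0]; omega
    have hrt : z % t < t := Nat.mod_lt _ ht0
    have hdm : z / t * t + z % t = z := Nat.div_add_mod' z t
    set j := z % t with hjdef
    set i := z / t - j with hidef
    have hij : i + j = z / t := by omega
    have hi : i * t + j * (t + 1) = z := by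
      have h' : (i + j) * t + j = z := by rw [hij]; omega
      have h'' : i * t + j * (t + 1) = (i + j) * t + j := by ring
      omega
    have ex : x = a * t ^ 2 + j * (t + 1) + i * t := by omega
    have e : (x, y) = ((a * t ^ 2 + j * (t + 1) : ℕ), y) + ((i * t : ℕ), (0 : ℕ)) := by
      rw [Prod.mk_add_mk, ← ex]; simp
    rw [e]
    exact Finset.add_mem_add (hmemS j y (by omega) hy) (hmemT i (by omega))
  -- the covering
  intro x hx y hy
  have hx' : x < 4 * (a * t ^ 2) + 2 * t ^ 2 := by omega
  rcases lt_or_ge x (a * t ^ 2) with h | h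
  · exact keyT 0 base0 x y (Nat.zero_le _) (by omega) hy
  rcases lt_or_ge x (a * t ^ 2 + t ^ 2 + t) with h2 | h2
  · exact keyS 0 base0 x y (by omega) (by omega) hy
  rcases lt_or_ge x (2 * a * t ^ 2) with h3 | h3
  · exact key3 x y (by omega) h3 hy
  rcases lt_or_ge x (3 * (a * t ^ 2)) with h4 | h4
  · exact keyT (2 * a * t ^ 2) hmemI₂ x y h3 (by omega) hy
  rcases lt_or_ge x ((3 * a + 1) * t ^ 2) with h5 | h5
  · exact keyS (2 * a * t ^ 2) hmemI₂ x y (by omega) (by omega) hy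
  rcases lt_or_ge x ((3 * a + 1) * t ^ 2 + a * t ^ 2) with h6 | h6
  · exact keyT ((3 * a + 1) * t ^ 2) hmemI₃ x y h5 h6 hy
  · exact keyS ((3 * a + 1) * t ^ 2) hmemI₃ x y (by omega) (by omega) hy
end

section
/- Let s_x = 2·h_x and s_y = 2·h_y with integers h_x, h_y ≥ 1. The boundary set A = ([0,h_x] × {0, h_y}) ∪ ({0, h_x} × [0,h_y]) satisfies |A| = s_x + s_y, A ⊆ [0,h_x] × [0,h_y], and A + A = [0,s_x] × [0,s_y]; that is, the boundary basis is a restricted planar additive basis for [0,s_x] × [0,s_y] with s_x + s_y elements. -/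
open Pointwise

/-- The boundary basis `([0,h_x] × {0,h_y}) ∪ ({0,h_x} × [0,h_y])` has
`s_x + s_y = 2h_x + 2h_y` elements, is contained in `[0,h_x] × [0,h_y]`,
and satisfies `A + A = [0,2h_x] × [0,2h_y]`: it is a restricted basis. -/
theorem boundary_basis (hx hy : ℕ) (hhx : 1 ≤ hx) (hhy : 1 ≤ hy)
    (A : Finset (ℕ × ℕ))
    (hA : A = (Finset.Icc 0 hx ×ˢ ({0, hy} : Finset ℕ)) ∪
      (({0, hx} : Finset ℕ) ×ˢ Finset.Icc 0 hy)) :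
    A.card = 2 * hx + 2 * hy ∧
    (∀ p ∈ A, p.1 ≤ hx ∧ p.2 ≤ hy) ∧
    A + A = Finset.Icc 0 (2 * hx) ×ˢ Finset.Icc 0 (2 * hy) := by
  subst hA
  have hmem : ∀ p : ℕ × ℕ,
      p ∈ (Finset.Icc 0 hx ×ˢ ({0, hy} : Finset ℕ)) ∪
        (({0, hx} : Finset ℕ) ×ˢ Finset.Icc 0 hy) ↔
      (p.1 ≤ hx ∧ (p.2 = 0 ∨ p.2 = hy)) ∨ ((p.1 = 0 ∨ p.1 = hx) ∧ p.2 ≤ hy) := by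
    intro p
    simp [Finset.mem_union, Finset.mem_product, Finset.mem_Icc, Finset.mem_insert]
  refine ⟨?_, ?_, ?_⟩
  · -- cardinality
    have hinter : (Finset.Icc 0 hx ×ˢ ({0, hy} : Finset ℕ)) ∩
        (({0, hx} : Finset ℕ) ×ˢ Finset.Icc 0 hy) =
        ({0, hx} : Finset ℕ) ×ˢ ({0, hy} : Finset ℕ) := by
      ext p
      simp only [Finset.mem_inter, Finset.mem_product, Finset.mem_Icc, Finset.mem_insert,
        Finset.mem_singleton]
      omega
    have h1 : (Finset.Icc 0 hx ×ˢ ({0, hy} : Finset ℕ)).card = (hx + 1) * 2 := by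
      rw [Finset.card_product, Nat.card_Icc, Finset.card_insert_of_notMem (by simp; omega),
        Finset.card_singleton]
      omega
    have h2 : ((({0, hx} : Finset ℕ)) ×ˢ Finset.Icc 0 hy).card = 2 * (hy + 1) := by
      rw [Finset.card_product, Nat.card_Icc, Finset.card_insert_of_notMem (by simp; omega),
        Finset.card_singleton]
      omega
    have h3 : (({0, hx} : Finset ℕ) ×ˢ ({0, hy} : Finset ℕ)).card = 4 := by
      rw [Finset.card_product, Finset.card_insert_of_notMem (by simp; omega),
        Finset.card_insert_of_notMem (by simp; omega)]
      simp
    have := Finset.card_union_add_card_inter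
      (Finset.Icc 0 hx ×ˢ ({0, hy} : Finset ℕ)) ((({0, hx} : Finset ℕ)) ×ˢ Finset.Icc 0 hy)
    rw [hinter, h1, h2, h3] at this
    omega
  · intro p hp
    rcases (hmem p).1 hp with ⟨h1, h2⟩ | ⟨h1, h2⟩ <;> constructor <;> omega
  · ext p
    simp only [Finset.mem_add, Finset.mem_product, Finset.mem_Icc]
    constructor
    · rintro ⟨q, hq, r, hr, rfl⟩
      rcases (hmem q).1 hq with ⟨q1, q2⟩ | ⟨q1, q2⟩ <;>
        rcases (hmem r).1 hr with ⟨r1, r2⟩ | ⟨r1, r2⟩ <;>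
        constructor <;> simp [Prod.fst_add, Prod.snd_add] <;> omega
    · rintro ⟨⟨-, h1⟩, -, h2⟩
      refine ⟨(if p.1 ≤ hx then p.1 else p.1 - hx, if p.2 ≤ hy then 0 else hy),
        (hmem _).2 ?_,
        (if p.1 ≤ hx then 0 else hx, if p.2 ≤ hy then p.2 else p.2 - hy),
        (hmem _).2 ?_, ?_⟩
      · left
        constructor
        · split_ifs <;> omega
        · split_ifs <;> simp
      · right
        constructor
        · split_ifs <;> simp
        · split_ifs <;> omega
      · ext <;> simp [Prod.fst_add, Prod.snd_add] <;> split_ifs <;> omega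
end

section
/- There exists a planar additive basis for the 7-square with only 14 elements; that is, there is a set A ⊆ [0,7] × [0,7] of integer pairs with |A| = 14 and A + A ⊇ [0,7] × [0,7]. In particular, the minimal basis cardinality of the 7-square is strictly less than the s_x + s_y + 1 = 15 elements of the L-shaped basis. -/
set_option maxRecDepth 4000

open Pointwise

/-- There is a 14-element basis for the 7-square; in particular the minimal
basis cardinality of the 7-square is strictly less than `15`, the size of
the L-shaped basis. -/
theorem seven_square_14 :
    (∃ A : Finset (ℕ × ℕ), (∀ p ∈ A, p.1 ≤ 7 ∧ p.2 ≤ 7) ∧ A.card = 14 ∧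
      ∀ x ≤ 7, ∀ y ≤ 7, (x, y) ∈ A + A) ∧
    sInf {k : ℕ | ∃ A : Finset (ℕ × ℕ), A.card = k ∧
      ∀ x ≤ 7, ∀ y ≤ 7, (x, y) ∈ A + A} < 15 := by
  have h : ∃ A : Finset (ℕ × ℕ), (∀ p ∈ A, p.1 ≤ 7 ∧ p.2 ≤ 7) ∧ A.card = 14 ∧
      ∀ x ≤ 7, ∀ y ≤ 7, (x, y) ∈ A + A := by
    refine ⟨{(0,0),(0,1),(0,2),(0,5),(1,0),(1,2),(1,5),(2,0),(2,1),(2,2),(2,5),(5,0),(5,1),(5,2)}, ?_, ?_, ?_⟩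
    · decide
    · decide
    · decide
  refine ⟨h, ?_⟩
  obtain ⟨A, _, hc, hcov⟩ := h
  calc sInf {k : ℕ | ∃ A : Finset (ℕ × ℕ), A.card = k ∧
      ∀ x ≤ 7, ∀ y ≤ 7, (x, y) ∈ A + A} ≤ 14 := Nat.sInf_le ⟨A, hc, hcov⟩
    _ < 15 := by norm_num
end
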